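/- arXiv:2110.08836 — 7 statements merged into one kernel-verified Lean document; each statement's English description precedes it below -/
import Mathlib

section
/- Let W₁, W₂ be regular bivariate matrix pencils whose characteristic polynomials p₁ and p₂ are coprime (they have no nonconstant common divisor in ℂ[λ,μ]). Let (λ₀,μ₀) ∈ ℂ² be a finite eigenvalue of the associated pair of pencils (Δ₁ − λΔ₀, Δ₂ − μΔ₀), and assume the genericity conditions (1)–(6) hold at (λ₀,μ₀). Then there exist nonzero vectors x₁ ∈ ℂ^{n₁}, x₂ ∈ ℂ^{n₂} with W₁(λ₀,μ₀)x₁ = 0 and W₂(λ₀,μ₀)x₂ = 0; that is, (λ₀,μ₀) is a finite eigenvalue of the two-parameter problem. -/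
open Matrix Kronecker

noncomputable section

def vkron {n₁ n₂ : ℕ} (x : Fin n₁ → ℂ) (y : Fin n₂ → ℂ) : Fin n₁ × Fin n₂ → ℂ :=
  fun p => x p.1 * y p.2

def GKer {N : Type*} [Fintype N] (A B : Matrix N N ℂ) (ξ : ℂ) :
    Submodule ℂ (N → ℂ) :=
  Submodule.span ℂ {v | ∃ p : N → Polynomial ℂ,
    (∀ t : ℂ, (A - t • B).mulVec (fun i => (p i).eval t) = 0) ∧
    v = fun i => (p i).eval ξ}

def RedMin {N : Type*} [Fintype N] (A B : Matrix N N ℂ) : Submodule ℂ (N → ℂ) :=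
  Submodule.span ℂ (⋃ ξ : ℂ, (GKer A B ξ : Set (N → ℂ)))

def nrank {N : Type*} [Fintype N] (A B : Matrix N N ℂ) : ℕ :=
  ⨆ ξ : ℂ, (A - ξ • B).rank

def Wmat {n : ℕ} (A B C : Matrix (Fin n) (Fin n) ℂ) (l m : ℂ) :
    Matrix (Fin n) (Fin n) ℂ := A + l • B + m • C

def charPoly {n : ℕ} (A B C : Matrix (Fin n) (Fin n) ℂ) : MvPolynomial (Fin 2) ℂ :=
  Matrix.det (Matrix.of fun i j =>
    MvPolynomial.C (A i j) + MvPolynomial.X 0 * MvPolynomial.C (B i j)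
      + MvPolynomial.X 1 * MvPolynomial.C (C i j))

def ev2 (p : MvPolynomial (Fin 2) ℂ) (l m : ℂ) : ℂ := MvPolynomial.eval ![l, m] p

def Delta0 {n₁ n₂ : ℕ} (B₁ C₁ : Matrix (Fin n₁) (Fin n₁) ℂ)
    (B₂ C₂ : Matrix (Fin n₂) (Fin n₂) ℂ) :
    Matrix (Fin n₁ × Fin n₂) (Fin n₁ × Fin n₂) ℂ :=
  B₁ ⊗ₖ C₂ - C₁ ⊗ₖ B₂

def Delta1 {n₁ n₂ : ℕ} (A₁ C₁ : Matrix (Fin n₁) (Fin n₁) ℂ)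
    (A₂ C₂ : Matrix (Fin n₂) (Fin n₂) ℂ) :
    Matrix (Fin n₁ × Fin n₂) (Fin n₁ × Fin n₂) ℂ :=
  C₁ ⊗ₖ A₂ - A₁ ⊗ₖ C₂

def Delta2 {n₁ n₂ : ℕ} (A₁ B₁ : Matrix (Fin n₁) (Fin n₁) ℂ)
    (A₂ B₂ : Matrix (Fin n₂) (Fin n₂) ℂ) :
    Matrix (Fin n₁ × Fin n₂) (Fin n₁ × Fin n₂) ℂ :=
  A₁ ⊗ₖ B₂ - B₁ ⊗ₖ A₂

/-- `(λ₀,μ₀)` is a finite eigenvalue of the two-parameter problem. -/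
def IsFiniteEigW {n₁ n₂ : ℕ}
    (A₁ B₁ C₁ : Matrix (Fin n₁) (Fin n₁) ℂ) (A₂ B₂ C₂ : Matrix (Fin n₂) (Fin n₂) ℂ)
    (l₀ m₀ : ℂ) : Prop :=
  (∀ q : MvPolynomial (Fin 2) ℂ,
      q ∣ charPoly A₁ B₁ C₁ → q ∣ charPoly A₂ B₂ C₂ →
      (¬ ∃ c : ℂ, q = MvPolynomial.C c) → ev2 q l₀ m₀ ≠ 0) ∧
  (∃ x₁ : Fin n₁ → ℂ, x₁ ≠ 0 ∧ (Wmat A₁ B₁ C₁ l₀ m₀).mulVec x₁ = 0) ∧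
  (∃ x₂ : Fin n₂ → ℂ, x₂ ≠ 0 ∧ (Wmat A₂ B₂ C₂ l₀ m₀).mulVec x₂ = 0)

/-- `(λ₀,μ₀)` is a finite eigenvalue of the pair of pencils
`(Δ₁ − λΔ₀, Δ₂ − μΔ₀)`. -/
def IsFiniteEigDelta {n₁ n₂ : ℕ}
    (A₁ B₁ C₁ : Matrix (Fin n₁) (Fin n₁) ℂ) (A₂ B₂ C₂ : Matrix (Fin n₂) (Fin n₂) ℂ)
    (l₀ m₀ : ℂ) : Prop :=
  (Delta1 A₁ C₁ A₂ C₂ - l₀ • Delta0 B₁ C₁ B₂ C₂).rank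
      < nrank (Delta1 A₁ C₁ A₂ C₂) (Delta0 B₁ C₁ B₂ C₂) ∧
  (Delta2 A₁ B₁ A₂ B₂ - m₀ • Delta0 B₁ C₁ B₂ C₂).rank
      < nrank (Delta2 A₁ B₁ A₂ B₂) (Delta0 B₁ C₁ B₂ C₂) ∧
  ∃ z : Fin n₁ × Fin n₂ → ℂ, z ≠ 0 ∧
    (Delta1 A₁ C₁ A₂ C₂).mulVec z = l₀ • (Delta0 B₁ C₁ B₂ C₂).mulVec z ∧
    (Delta2 A₁ B₁ A₂ B₂).mulVec z = m₀ • (Delta0 B₁ C₁ B₂ C₂).mulVec z ∧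
    z ∉ RedMin (Delta1 A₁ C₁ A₂ C₂) (Delta0 B₁ C₁ B₂ C₂) ∧
    z ∉ RedMin (Delta2 A₁ B₁ A₂ B₂) (Delta0 B₁ C₁ B₂ C₂)

/-- Genericity conditions (1)–(6) at `(λ₀,μ₀)`. -/
def Generic {n₁ n₂ : ℕ}
    (A₁ B₁ C₁ : Matrix (Fin n₁) (Fin n₁) ℂ) (A₂ B₂ C₂ : Matrix (Fin n₂) (Fin n₂) ℂ)
    (l₀ m₀ : ℂ) : Prop :=
  -- (1) the univariate polynomial `γ ↦ pᵢ(λ₀,γ)` is not identically zero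
  (∃ γ : ℂ, ev2 (charPoly A₁ B₁ C₁) l₀ γ ≠ 0) ∧
  (∃ γ : ℂ, ev2 (charPoly A₂ B₂ C₂) l₀ γ ≠ 0) ∧
  -- (2) the univariate polynomial `β ↦ pᵢ(β,μ₀)` is not identically zero
  (∃ β : ℂ, ev2 (charPoly A₁ B₁ C₁) β m₀ ≠ 0) ∧
  (∃ β : ℂ, ev2 (charPoly A₂ B₂ C₂) β m₀ ≠ 0) ∧
  -- (3)
  (∃ ε > (0:ℝ), ∀ η : ℂ, η ≠ l₀ → ‖η - l₀‖ < ε →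
    (Wmat A₁ B₁ C₁ η m₀).rank = n₁ ∧ (Wmat A₂ B₂ C₂ η m₀).rank = n₂) ∧
  -- (4)
  (∃ ε > (0:ℝ), ∀ θ : ℂ, θ ≠ m₀ → ‖θ - m₀‖ < ε →
    (Wmat A₁ B₁ C₁ l₀ θ).rank = n₁ ∧ (Wmat A₂ B₂ C₂ l₀ θ).rank = n₂) ∧
  -- (5)
  (∀ l₁ m₁ : ℂ, IsFiniteEigW A₁ B₁ C₁ A₂ B₂ C₂ l₁ m₁ → (l₁, m₁) ≠ (l₀, m₀) →
    l₁ ≠ l₀ ∧ m₁ ≠ m₀) ∧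
  -- (6)
  (∃ ε > (0:ℝ), ∀ η θ : ℂ, (η, θ) ≠ (l₀, m₀) → ‖η - l₀‖ + ‖θ - m₀‖ < ε →
    (Wmat A₁ B₁ C₁ l₀ m₀).rank + (Wmat A₂ B₂ C₂ l₀ m₀).rank <
    (Wmat A₁ B₁ C₁ η θ).rank + (Wmat A₂ B₂ C₂ η θ).rank)


section Aux

open Polynomial in
lemma map_mulVec_fun {N : Type*} [Fintype N] (f : Polynomial ℂ →+* ℂ)
    (M : Matrix N N (Polynomial ℂ)) (v : N → Polynomial ℂ) :
    (fun i => f (M.mulVec v i)) = (M.map f).mulVec (fun i => f (v i)) := by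
  funext i
  simp [Matrix.mulVec, dotProduct, map_sum, Matrix.map_apply]

lemma map_kron {n₁ n₂ : ℕ} (f : Polynomial ℂ →+* ℂ)
    (M : Matrix (Fin n₁) (Fin n₁) (Polynomial ℂ)) (N : Matrix (Fin n₂) (Fin n₂) (Polynomial ℂ)) :
    (M ⊗ₖ N).map f = (M.map f) ⊗ₖ (N.map f) := by
  ext ⟨i, k⟩ ⟨j, l⟩
  simp [Matrix.kroneckerMap_apply, Matrix.map_apply]

/-- Key algebraic lemma: if `z` satisfies the Δ-pencil eigenvalue equations at
`(l₀,m₀)` and `z` is not in the minimal reducing subspace of `(Δ₁, Δ₀)`, then both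
`W₁(l₀,m₀)` and `W₂(l₀,m₀)` are singular. -/
lemma det_Wmat_eq_zero {n₁ n₂ : ℕ}
    (A₁ B₁ C₁ : Matrix (Fin n₁) (Fin n₁) ℂ) (A₂ B₂ C₂ : Matrix (Fin n₂) (Fin n₂) ℂ)
    (l₀ m₀ : ℂ) (z : Fin n₁ × Fin n₂ → ℂ)
    (h1 : (Delta1 A₁ C₁ A₂ C₂).mulVec z = l₀ • (Delta0 B₁ C₁ B₂ C₂).mulVec z)
    (h2 : (Delta2 A₁ B₁ A₂ B₂).mulVec z = m₀ • (Delta0 B₁ C₁ B₂ C₂).mulVec z)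
    (hz : z ∉ RedMin (Delta1 A₁ C₁ A₂ C₂) (Delta0 B₁ C₁ B₂ C₂)) :
    (Wmat A₁ B₁ C₁ l₀ m₀).det = 0 ∧ (Wmat A₂ B₂ C₂ l₀ m₀).det = 0 := by
  classical
  -- abbreviations (plain `have`-style defs would lose definitional unfolding; use explicit terms)
  -- structural matrix identities
  have E1 : ∀ t : ℂ,
      C₁ ⊗ₖ (Wmat A₂ B₂ C₂ t m₀) - (Wmat A₁ B₁ C₁ t m₀) ⊗ₖ C₂
        = Delta1 A₁ C₁ A₂ C₂ - t • Delta0 B₁ C₁ B₂ C₂ := by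
    intro t
    ext ⟨i, k⟩ ⟨j, l⟩
    simp only [Matrix.sub_apply, Matrix.smul_apply, Matrix.kroneckerMap_apply, Wmat,
      Delta1, Delta0, Matrix.add_apply, smul_eq_mul, Pi.smul_apply]
    ring
  have E2 : (Wmat A₁ B₁ C₁ l₀ m₀) ⊗ₖ B₂ - B₁ ⊗ₖ (Wmat A₂ B₂ C₂ l₀ m₀)
      = Delta2 A₁ B₁ A₂ B₂ - m₀ • Delta0 B₁ C₁ B₂ C₂ := by
    ext ⟨i, k⟩ ⟨j, l⟩
    simp only [Matrix.sub_apply, Matrix.smul_apply, Matrix.kroneckerMap_apply, Wmat,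
      Delta2, Delta0, Matrix.add_apply, smul_eq_mul, Pi.smul_apply]
    ring
  have E3 : A₁ ⊗ₖ (Wmat A₂ B₂ C₂ l₀ m₀) - (Wmat A₁ B₁ C₁ l₀ m₀) ⊗ₖ A₂
      = l₀ • Delta2 A₁ B₁ A₂ B₂ - m₀ • Delta1 A₁ C₁ A₂ C₂ := by
    ext ⟨i, k⟩ ⟨j, l⟩
    simp only [Matrix.sub_apply, Matrix.smul_apply, Matrix.kroneckerMap_apply, Wmat,
      Delta2, Delta1, Matrix.add_apply, smul_eq_mul, Pi.smul_apply]
    ring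
  -- base relations applied to z
  have hC : (C₁ ⊗ₖ (Wmat A₂ B₂ C₂ l₀ m₀)).mulVec z
      = ((Wmat A₁ B₁ C₁ l₀ m₀) ⊗ₖ C₂).mulVec z := by
    have h := congrArg (fun M : Matrix (Fin n₁ × Fin n₂) (Fin n₁ × Fin n₂) ℂ => M.mulVec z) (E1 l₀)
    simp only [Matrix.sub_mulVec, Matrix.smul_mulVec] at h
    rw [h1, sub_self] at h
    exact sub_eq_zero.mp h
  have hB : (B₁ ⊗ₖ (Wmat A₂ B₂ C₂ l₀ m₀)).mulVec z
      = ((Wmat A₁ B₁ C₁ l₀ m₀) ⊗ₖ B₂).mulVec z := by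
    have h := congrArg (fun M : Matrix (Fin n₁ × Fin n₂) (Fin n₁ × Fin n₂) ℂ => M.mulVec z) E2
    simp only [Matrix.sub_mulVec, Matrix.smul_mulVec] at h
    rw [h2, sub_self] at h
    exact (sub_eq_zero.mp h).symm
  have hA : (A₁ ⊗ₖ (Wmat A₂ B₂ C₂ l₀ m₀)).mulVec z
      = ((Wmat A₁ B₁ C₁ l₀ m₀) ⊗ₖ A₂).mulVec z := by
    have h := congrArg (fun M : Matrix (Fin n₁ × Fin n₂) (Fin n₁ × Fin n₂) ℂ => M.mulVec z) E3
    simp only [Matrix.sub_mulVec, Matrix.smul_mulVec] at h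
    rw [h1, h2, smul_comm l₀ m₀, sub_self] at h
    exact sub_eq_zero.mp h
  -- the pinned two-sided relation, for every t
  have hW : ∀ t : ℂ, ((Wmat A₁ B₁ C₁ t m₀) ⊗ₖ (Wmat A₂ B₂ C₂ l₀ m₀)).mulVec z
      = ((Wmat A₁ B₁ C₁ l₀ m₀) ⊗ₖ (Wmat A₂ B₂ C₂ t m₀)).mulVec z := by
    intro t
    have ex1 : (Wmat A₁ B₁ C₁ t m₀) ⊗ₖ (Wmat A₂ B₂ C₂ l₀ m₀)
        = A₁ ⊗ₖ (Wmat A₂ B₂ C₂ l₀ m₀) + t • (B₁ ⊗ₖ (Wmat A₂ B₂ C₂ l₀ m₀))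
          + m₀ • (C₁ ⊗ₖ (Wmat A₂ B₂ C₂ l₀ m₀)) := by
      ext ⟨i, k⟩ ⟨j, l⟩
      simp only [Matrix.add_apply, Matrix.smul_apply, Matrix.kroneckerMap_apply, Wmat,
        smul_eq_mul, Pi.smul_apply]
      ring
    have ex2 : (Wmat A₁ B₁ C₁ l₀ m₀) ⊗ₖ (Wmat A₂ B₂ C₂ t m₀)
        = (Wmat A₁ B₁ C₁ l₀ m₀) ⊗ₖ A₂ + t • ((Wmat A₁ B₁ C₁ l₀ m₀) ⊗ₖ B₂)
          + m₀ • ((Wmat A₁ B₁ C₁ l₀ m₀) ⊗ₖ C₂) := by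
      ext ⟨i, k⟩ ⟨j, l⟩
      simp only [Matrix.add_apply, Matrix.smul_apply, Matrix.kroneckerMap_apply, Wmat,
        smul_eq_mul, Pi.smul_apply]
      ring
    rw [ex1, ex2, Matrix.add_mulVec, Matrix.add_mulVec, Matrix.add_mulVec, Matrix.add_mulVec,
      Matrix.smul_mulVec, Matrix.smul_mulVec, Matrix.smul_mulVec,
      Matrix.smul_mulVec, hA, hB, hC]
  -- membership criterion for RedMin
  have memRM : ∀ p : (Fin n₁ × Fin n₂) → Polynomial ℂ,
      (∀ t : ℂ, (Delta1 A₁ C₁ A₂ C₂ - t • Delta0 B₁ C₁ B₂ C₂).mulVec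
          (fun i => (p i).eval t) = 0) →
      (fun i => (p i).eval l₀) ∈ RedMin (Delta1 A₁ C₁ A₂ C₂) (Delta0 B₁ C₁ B₂ C₂) := by
    intro p hp
    have h1 : (fun i => (p i).eval l₀) ∈ GKer (Delta1 A₁ C₁ A₂ C₂) (Delta0 B₁ C₁ B₂ C₂) l₀ :=
      Submodule.subset_span ⟨p, hp, rfl⟩
    exact Submodule.subset_span (Set.mem_iUnion.mpr ⟨l₀, h1⟩)
  constructor
  · -- det W₁ = 0
    by_contra hd
    set W₁ := Wmat A₁ B₁ C₁ l₀ m₀ with hW₁def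
    set W1X : Matrix (Fin n₁) (Fin n₁) (Polynomial ℂ) :=
      Matrix.of fun i j => Polynomial.C (A₁ i j) + Polynomial.X * Polynomial.C (B₁ i j)
        + Polynomial.C m₀ * Polynomial.C (C₁ i j) with hW1Xdef
    set pv : (Fin n₁ × Fin n₂) → Polynomial ℂ :=
      ((W1X.adjugate * (W₁.map Polynomial.C)) ⊗ₖ
        (1 : Matrix (Fin n₂) (Fin n₂) (Polynomial ℂ))).mulVec
        (fun i => Polynomial.C (z i)) with hpv
    have hevalW : ∀ t : ℂ, W1X.map (Polynomial.eval t) = Wmat A₁ B₁ C₁ t m₀ := by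
      intro t
      ext i j
      rw [hW1Xdef]
      simp only [Matrix.map_apply, Matrix.of_apply, Polynomial.eval_add,
        Polynomial.eval_mul, Polynomial.eval_C, Polynomial.eval_X, Wmat, Matrix.add_apply,
        Matrix.smul_apply, smul_eq_mul]
    have hevalp : ∀ t : ℂ, (fun i => (pv i).eval t)
        = (((Wmat A₁ B₁ C₁ t m₀).adjugate * W₁) ⊗ₖ
            (1 : Matrix (Fin n₂) (Fin n₂) ℂ)).mulVec z := by
      intro t
      have h := map_mulVec_fun (Polynomial.evalRingHom t)
        ((W1X.adjugate * (W₁.map Polynomial.C)) ⊗ₖ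
          (1 : Matrix (Fin n₂) (Fin n₂) (Polynomial ℂ)))
        (fun i => Polynomial.C (z i))
      rw [map_kron] at h
      have hadj : (W1X.adjugate * (W₁.map Polynomial.C)).map (Polynomial.evalRingHom t)
          = (Wmat A₁ B₁ C₁ t m₀).adjugate * W₁ := by
        rw [Matrix.map_mul]
        congr 1
        · have := (Polynomial.evalRingHom t).map_adjugate W1X
          simpa [RingHom.mapMatrix_apply, Polynomial.coe_evalRingHom, hevalW t] using this
        · ext i j
          simp [Matrix.map_apply]
      have hone : (1 : Matrix (Fin n₂) (Fin n₂) (Polynomial ℂ)).map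
          (Polynomial.evalRingHom t) = 1 :=
        Matrix.map_one _ (map_zero _) (map_one _)
      have hz' : (fun i => (Polynomial.evalRingHom t) ((fun i => Polynomial.C (z i)) i)) = z := by
        funext i; simp
      rw [hadj, hone, hz'] at h
      simpa [hpv, Polynomial.coe_evalRingHom] using h
    have hker : ∀ t : ℂ, (Delta1 A₁ C₁ A₂ C₂ - t • Delta0 B₁ C₁ B₂ C₂).mulVec
        (fun i => (pv i).eval t) = 0 := by
      intro t
      rw [hevalp t, ← E1 t, Matrix.sub_mulVec, Matrix.mulVec_mulVec, Matrix.mulVec_mulVec]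
      have T1 : (C₁ ⊗ₖ (Wmat A₂ B₂ C₂ t m₀)) * (((Wmat A₁ B₁ C₁ t m₀).adjugate * W₁) ⊗ₖ
            (1 : Matrix (Fin n₂) (Fin n₂) ℂ))
          = ((C₁ * (Wmat A₁ B₁ C₁ t m₀).adjugate) ⊗ₖ (1 : Matrix (Fin n₂) (Fin n₂) ℂ))
            * (W₁ ⊗ₖ (Wmat A₂ B₂ C₂ t m₀)) := by
        rw [← Matrix.mul_kronecker_mul, ← Matrix.mul_kronecker_mul,
          Matrix.mul_one, Matrix.one_mul, Matrix.mul_assoc]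
      have T1' : (((C₁ * (Wmat A₁ B₁ C₁ t m₀).adjugate) ⊗ₖ (1 : Matrix (Fin n₂) (Fin n₂) ℂ))
            * ((Wmat A₁ B₁ C₁ t m₀) ⊗ₖ (Wmat A₂ B₂ C₂ l₀ m₀)))
          = (Wmat A₁ B₁ C₁ t m₀).det • (C₁ ⊗ₖ (Wmat A₂ B₂ C₂ l₀ m₀)) := by
        rw [← Matrix.mul_kronecker_mul, Matrix.one_mul, Matrix.mul_assoc,
          Matrix.adjugate_mul, Matrix.mul_smul, Matrix.mul_one, Matrix.smul_kronecker]
      have T2 : ((Wmat A₁ B₁ C₁ t m₀) ⊗ₖ C₂) * (((Wmat A₁ B₁ C₁ t m₀).adjugate * W₁) ⊗ₖ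
            (1 : Matrix (Fin n₂) (Fin n₂) ℂ))
          = (Wmat A₁ B₁ C₁ t m₀).det • (W₁ ⊗ₖ C₂) := by
        rw [← Matrix.mul_kronecker_mul, Matrix.mul_one, ← Matrix.mul_assoc,
          Matrix.mul_adjugate, Matrix.smul_mul, Matrix.one_mul, Matrix.smul_kronecker]
      rw [T1, T2, ← Matrix.mulVec_mulVec, ← hW t, Matrix.mulVec_mulVec, T1',
        Matrix.smul_mulVec, Matrix.smul_mulVec, hC, sub_self]
    have hmem := memRM pv hker
    have hv : (fun i => (pv i).eval l₀) = W₁.det • z := by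
      rw [hevalp l₀]
      have e : ((Wmat A₁ B₁ C₁ l₀ m₀).adjugate * W₁) ⊗ₖ (1 : Matrix (Fin n₂) (Fin n₂) ℂ)
          = W₁.det • 1 := by
        rw [← hW₁def, Matrix.adjugate_mul, Matrix.smul_kronecker, Matrix.one_kronecker_one]
      rw [e, Matrix.smul_mulVec, Matrix.one_mulVec]
    rw [hv] at hmem
    have hmem' := (RedMin (Delta1 A₁ C₁ A₂ C₂) (Delta0 B₁ C₁ B₂ C₂)).smul_mem (W₁.det)⁻¹ hmem
    rw [smul_smul, inv_mul_cancel₀ hd, one_smul] at hmem'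
    exact hz hmem'
  · -- det W₂ = 0
    by_contra hd
    set W₂ := Wmat A₂ B₂ C₂ l₀ m₀ with hW₂def
    set W2X : Matrix (Fin n₂) (Fin n₂) (Polynomial ℂ) :=
      Matrix.of fun i j => Polynomial.C (A₂ i j) + Polynomial.X * Polynomial.C (B₂ i j)
        + Polynomial.C m₀ * Polynomial.C (C₂ i j) with hW2Xdef
    set pv : (Fin n₁ × Fin n₂) → Polynomial ℂ :=
      ((1 : Matrix (Fin n₁) (Fin n₁) (Polynomial ℂ)) ⊗ₖ
        (W2X.adjugate * (W₂.map Polynomial.C))).mulVec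
        (fun i => Polynomial.C (z i)) with hpv
    have hevalW : ∀ t : ℂ, W2X.map (Polynomial.eval t) = Wmat A₂ B₂ C₂ t m₀ := by
      intro t
      ext i j
      rw [hW2Xdef]
      simp only [Matrix.map_apply, Matrix.of_apply, Polynomial.eval_add,
        Polynomial.eval_mul, Polynomial.eval_C, Polynomial.eval_X, Wmat, Matrix.add_apply,
        Matrix.smul_apply, smul_eq_mul]
    have hevalp : ∀ t : ℂ, (fun i => (pv i).eval t)
        = ((1 : Matrix (Fin n₁) (Fin n₁) ℂ) ⊗ₖ
            ((Wmat A₂ B₂ C₂ t m₀).adjugate * W₂)).mulVec z := by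
      intro t
      have h := map_mulVec_fun (Polynomial.evalRingHom t)
        ((1 : Matrix (Fin n₁) (Fin n₁) (Polynomial ℂ)) ⊗ₖ
          (W2X.adjugate * (W₂.map Polynomial.C)))
        (fun i => Polynomial.C (z i))
      rw [map_kron] at h
      have hadj : (W2X.adjugate * (W₂.map Polynomial.C)).map (Polynomial.evalRingHom t)
          = (Wmat A₂ B₂ C₂ t m₀).adjugate * W₂ := by
        rw [Matrix.map_mul]
        congr 1
        · have := (Polynomial.evalRingHom t).map_adjugate W2X
          simpa [RingHom.mapMatrix_apply, Polynomial.coe_evalRingHom, hevalW t] using this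
        · ext i j
          simp [Matrix.map_apply]
      have hone : (1 : Matrix (Fin n₁) (Fin n₁) (Polynomial ℂ)).map
          (Polynomial.evalRingHom t) = 1 :=
        Matrix.map_one _ (map_zero _) (map_one _)
      have hz' : (fun i => (Polynomial.evalRingHom t) ((fun i => Polynomial.C (z i)) i)) = z := by
        funext i; simp
      rw [hadj, hone, hz'] at h
      simpa [hpv, Polynomial.coe_evalRingHom] using h
    have hker : ∀ t : ℂ, (Delta1 A₁ C₁ A₂ C₂ - t • Delta0 B₁ C₁ B₂ C₂).mulVec
        (fun i => (pv i).eval t) = 0 := by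
      intro t
      rw [hevalp t, ← E1 t, Matrix.sub_mulVec, Matrix.mulVec_mulVec, Matrix.mulVec_mulVec]
      have T1 : (C₁ ⊗ₖ (Wmat A₂ B₂ C₂ t m₀)) * ((1 : Matrix (Fin n₁) (Fin n₁) ℂ) ⊗ₖ
            ((Wmat A₂ B₂ C₂ t m₀).adjugate * W₂))
          = (Wmat A₂ B₂ C₂ t m₀).det • (C₁ ⊗ₖ W₂) := by
        rw [← Matrix.mul_kronecker_mul, Matrix.mul_one, ← Matrix.mul_assoc,
          Matrix.mul_adjugate, Matrix.smul_mul, Matrix.one_mul, Matrix.kronecker_smul]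
      have T2 : ((Wmat A₁ B₁ C₁ t m₀) ⊗ₖ C₂) * ((1 : Matrix (Fin n₁) (Fin n₁) ℂ) ⊗ₖ
            ((Wmat A₂ B₂ C₂ t m₀).adjugate * W₂))
          = ((1 : Matrix (Fin n₁) (Fin n₁) ℂ) ⊗ₖ (C₂ * (Wmat A₂ B₂ C₂ t m₀).adjugate))
            * ((Wmat A₁ B₁ C₁ t m₀) ⊗ₖ W₂) := by
        rw [← Matrix.mul_kronecker_mul, ← Matrix.mul_kronecker_mul,
          Matrix.mul_one, Matrix.one_mul, Matrix.mul_assoc]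
      have T2' : ((1 : Matrix (Fin n₁) (Fin n₁) ℂ) ⊗ₖ (C₂ * (Wmat A₂ B₂ C₂ t m₀).adjugate))
            * ((Wmat A₁ B₁ C₁ l₀ m₀) ⊗ₖ (Wmat A₂ B₂ C₂ t m₀))
          = (Wmat A₂ B₂ C₂ t m₀).det • ((Wmat A₁ B₁ C₁ l₀ m₀) ⊗ₖ C₂) := by
        rw [← Matrix.mul_kronecker_mul, Matrix.one_mul, Matrix.mul_assoc,
          Matrix.adjugate_mul, Matrix.mul_smul, Matrix.mul_one, Matrix.kronecker_smul]
      rw [T1, T2, ← Matrix.mulVec_mulVec, hW t, Matrix.mulVec_mulVec, T2',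
        Matrix.smul_mulVec, Matrix.smul_mulVec, hC, sub_self]
    have hmem := memRM pv hker
    have hv : (fun i => (pv i).eval l₀) = W₂.det • z := by
      rw [hevalp l₀]
      have e : (1 : Matrix (Fin n₁) (Fin n₁) ℂ) ⊗ₖ ((Wmat A₂ B₂ C₂ l₀ m₀).adjugate * W₂)
          = W₂.det • 1 := by
        rw [← hW₂def, Matrix.adjugate_mul, Matrix.kronecker_smul, Matrix.one_kronecker_one]
      rw [e, Matrix.smul_mulVec, Matrix.one_mulVec]
    rw [hv] at hmem
    have hmem' := (RedMin (Delta1 A₁ C₁ A₂ C₂) (Delta0 B₁ C₁ B₂ C₂)).smul_mem (W₂.det)⁻¹ hmem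
    rw [smul_smul, inv_mul_cancel₀ hd, one_smul] at hmem'
    exact hz hmem'

end Aux

/-- **Theorem (Δ ⇒ W, coprime case).** If the pencils `W₁, W₂` are regular, the
characteristic polynomials `p₁, p₂` are coprime (no nonconstant common divisor),
`(λ₀,μ₀)` is a finite eigenvalue of the pair `(Δ₁ − λΔ₀, Δ₂ − μΔ₀)`, and the
genericity conditions (1)–(6) hold at `(λ₀,μ₀)`, then `(λ₀,μ₀)` is a finite eigenvalue
of the two-parameter problem. -/
theorem eigDelta_to_eigW {n₁ n₂ : ℕ}
    (A₁ B₁ C₁ : Matrix (Fin n₁) (Fin n₁) ℂ) (A₂ B₂ C₂ : Matrix (Fin n₂) (Fin n₂) ℂ)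
    (l₀ m₀ : ℂ)
    (hreg₁ : charPoly A₁ B₁ C₁ ≠ 0) (hreg₂ : charPoly A₂ B₂ C₂ ≠ 0)
    (hcoprime : ∀ q : MvPolynomial (Fin 2) ℂ,
      q ∣ charPoly A₁ B₁ C₁ → q ∣ charPoly A₂ B₂ C₂ → ∃ c : ℂ, q = MvPolynomial.C c)
    (heig : IsFiniteEigDelta A₁ B₁ C₁ A₂ B₂ C₂ l₀ m₀)
    (hgen : Generic A₁ B₁ C₁ A₂ B₂ C₂ l₀ m₀) :
    (∃ x₁ : Fin n₁ → ℂ, x₁ ≠ 0 ∧ (Wmat A₁ B₁ C₁ l₀ m₀).mulVec x₁ = 0) ∧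
    (∃ x₂ : Fin n₂ → ℂ, x₂ ≠ 0 ∧ (Wmat A₂ B₂ C₂ l₀ m₀).mulVec x₂ = 0) ∧
    IsFiniteEigW A₁ B₁ C₁ A₂ B₂ C₂ l₀ m₀ := by
  obtain ⟨-, -, z, hz0, h1, h2, hzR1, hzR2⟩ := heig
  obtain ⟨hd1, hd2⟩ := det_Wmat_eq_zero A₁ B₁ C₁ A₂ B₂ C₂ l₀ m₀ z h1 h2 hzR1
  have ex1 : ∃ x₁ : Fin n₁ → ℂ, x₁ ≠ 0 ∧ (Wmat A₁ B₁ C₁ l₀ m₀).mulVec x₁ = 0 :=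
    Matrix.exists_mulVec_eq_zero_iff.mpr hd1
  have ex2 : ∃ x₂ : Fin n₂ → ℂ, x₂ ≠ 0 ∧ (Wmat A₂ B₂ C₂ l₀ m₀).mulVec x₂ = 0 :=
    Matrix.exists_mulVec_eq_zero_iff.mpr hd2
  refine ⟨ex1, ex2, ?_, ex1, ex2⟩
  intro q hq1 hq2 hnc
  exact absurd (hcoprime q hq1 hq2) hnc
end
end

section
/- Let m, ℓ ≥ 1, let d₁ ≥ d₂ ≥ … ≥ d_m be natural numbers and e₁, …, e_ℓ be natural numbers. Let 1 ≤ p < q ≤ m with d_p = d_{p+1} = … = d_{q−1} ≥ d_q ≥ 1, and define d'_i = d_i for i ∉ {p,q}, d'_p = d_p + 1, d'_q = d_q − 1. Then ∑_{i=1}^m ∑_{j=1}^ℓ min(d'_i, e_j) ≤ ∑_{i=1}^m ∑_{j=1}^ℓ min(d_i, e_j). -/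
open Finset

/-- **MLW move does not increase the kernel count.** Given antitone block sizes
`d₁ ≥ … ≥ d_m`, block sizes `e₁, …, e_ℓ`, indices `p < q` with
`d_p = d_{p+1} = … = d_{q−1} ≥ d_q ≥ 1`, and the MLW-perturbed sizes
`d'_p = d_p + 1`, `d'_q = d_q − 1`, `d'_i = d_i` otherwise, the sum
`∑ᵢ∑ⱼ min(d'ᵢ, eⱼ)` does not exceed `∑ᵢ∑ⱼ min(dᵢ, eⱼ)`. -/
theorem mlw_sum_le {m ℓ : ℕ} (hm : 1 ≤ m) (hℓ : 1 ≤ ℓ)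
    (d : Fin m → ℕ) (hd : Antitone d) (e : Fin ℓ → ℕ)
    (p q : Fin m) (hpq : p < q)
    (hplateau : ∀ i : Fin m, p ≤ i → i < q → d i = d p)
    (hq1 : 1 ≤ d q)
    (d' : Fin m → ℕ)
    (hd' : ∀ i : Fin m, d' i = if i = p then d p + 1 else if i = q then d q - 1 else d i) :
    ∑ i : Fin m, ∑ j : Fin ℓ, min (d' i) (e j) ≤
      ∑ i : Fin m, ∑ j : Fin ℓ, min (d i) (e j) := by
  have hne : p ≠ q := ne_of_lt hpq
  have hqp : d q ≤ d p := hd hpq.le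
  have hq_mem : q ∈ (univ : Finset (Fin m)).erase p := by
    simp [hne.symm]
  rw [← Finset.add_sum_erase _ _ (Finset.mem_univ p),
      ← Finset.add_sum_erase _ _ hq_mem,
      ← Finset.add_sum_erase _ (fun i => ∑ j : Fin ℓ, min (d i) (e j)) (Finset.mem_univ p),
      ← Finset.add_sum_erase _ (fun i => ∑ j : Fin ℓ, min (d i) (e j)) hq_mem]
  have hrest : ∑ i ∈ ((univ : Finset (Fin m)).erase p).erase q,
      ∑ j : Fin ℓ, min (d' i) (e j)
      = ∑ i ∈ ((univ : Finset (Fin m)).erase p).erase q,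
      ∑ j : Fin ℓ, min (d i) (e j) := by
    apply Finset.sum_congr rfl
    intro i hi
    have hip : i ≠ p := Finset.ne_of_mem_erase (Finset.mem_of_mem_erase hi)
    have hiq : i ≠ q := Finset.ne_of_mem_erase hi
    rw [hd' i, if_neg hip, if_neg hiq]
  rw [hrest, hd' p, if_pos rfl, hd' q, if_neg hne.symm, if_pos rfl]
  rw [← add_assoc, ← add_assoc]
  apply add_le_add_left
  rw [← Finset.sum_add_distrib, ← Finset.sum_add_distrib]
  apply Finset.sum_le_sum
  intro j _
  omega
end

section
/- Let A, B be n₁ × n₁ and C, D be n₂ × n₂ complex matrices, let α ∈ ℂ, and let d₁, d₂ ≥ 1. Suppose u₀ = 0 and u₁, …, u_{d₁} ∈ ℂ^{n₁} satisfy (A − αB) u_i = B u_{i−1} for i = 1, …, d₁, and v₀ = 0 and v₁, …, v_{d₂} ∈ ℂ^{n₂} satisfy (C − αD) v_i = D v_{i−1} for i = 1, …, d₂. Then for every j with 1 ≤ j ≤ min(d₁, d₂), the vector z_j = ∑_{i=1}^{j} u_i ⊗ v_{j+1−i} ∈ ℂ^{n₁ n₂} satisfies (A ⊗ D − B ⊗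 C) z_j = 0. -/
open Matrix Kronecker Finset

/-!
Since `A ⊗ D − B ⊗ C = (A − αB) ⊗ D − B ⊗ (C − αD)`, the chain relations give
`Δ (uᵢ ⊗ v_{j+1−i}) = w_{i−1} − wᵢ` with `wᵢ = B uᵢ ⊗ D v_{j−i}`. Hence `Δ z_j` telescopes to
`w₀ − w_j`, which vanishes because `u₀ = 0` and `v₀ = 0`.
-/

theorem Matrix.kronecker_sub_kronecker_eq_sub_smul {R l m n p : Type*} [CommRing R]
    (A B : Matrix l m R) (C D : Matrix n p R) (α : R) :
    A ⊗ₖ D - B ⊗ₖ C = (A - α • B) ⊗ₖ D - B ⊗ₖ (C - α • D) := by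
  ext ⟨i₁, i₂⟩ ⟨j₁, j₂⟩
  simp only [sub_apply, kronecker_apply, smul_apply, smul_eq_mul]
  ring

theorem kronecker_mulVec_vkron {n₁ n₂ : ℕ} (M : Matrix (Fin n₁) (Fin n₁) ℂ)
    (N : Matrix (Fin n₂) (Fin n₂) ℂ) (x : Fin n₁ → ℂ) (y : Fin n₂ → ℂ) :
    (M ⊗ₖ N) *ᵥ vkron x y = vkron (M *ᵥ x) (N *ᵥ y) := by
  funext ⟨i₁, i₂⟩
  simp only [mulVec, dotProduct, vkron, kronecker_apply, Fintype.sum_prod_type,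
    Finset.mul_sum, Finset.sum_mul]
  rw [Finset.sum_comm]
  refine Finset.sum_congr rfl fun _ _ => Finset.sum_congr rfl fun _ _ => ?_
  ring

theorem vkron_zero_left {n₁ n₂ : ℕ} (y : Fin n₂ → ℂ) : vkron (0 : Fin n₁ → ℂ) y = 0 := by
  funext p
  simp [vkron]

theorem vkron_zero_right {n₁ n₂ : ℕ} (x : Fin n₁ → ℂ) : vkron x (0 : Fin n₂ → ℂ) = 0 := by
  funext p
  simp [vkron]

theorem kronecker_sub_mulVec_vkron_of_chain_step {n₁ n₂ : ℕ}
    {A B : Matrix (Fin n₁) (Fin n₁) ℂ} {C D : Matrix (Fin n₂) (Fin n₂) ℂ} {α : ℂ}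
    {x x' : Fin n₁ → ℂ} {y y' : Fin n₂ → ℂ}
    (hx : (A - α • B) *ᵥ x = B *ᵥ x') (hy : (C - α • D) *ᵥ y = D *ᵥ y') :
    (A ⊗ₖ D - B ⊗ₖ C) *ᵥ vkron x y = vkron (B *ᵥ x') (D *ᵥ y) - vkron (B *ᵥ x) (D *ᵥ y') := by
  rw [kronecker_sub_kronecker_eq_sub_smul A B C D α, sub_mulVec, kronecker_mulVec_vkron,
    kronecker_mulVec_vkron, hx, hy]

theorem Finset.sum_Icc_one_sub_eq_sub {G : Type*} [AddCommGroup G] (f : ℕ → G) (n : ℕ) :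
    ∑ i ∈ Icc 1 n, (f (i - 1) - f i) = f 0 - f n := by
  induction n with
  | zero => simp
  | succ n ih =>
    rw [sum_Icc_succ_top (by omega), ih, Nat.add_sub_cancel]
    abel

theorem jordan_pair_kernel_vectors_general {n₁ n₂ d₁ d₂ : ℕ}
    (A B : Matrix (Fin n₁) (Fin n₁) ℂ) (C D : Matrix (Fin n₂) (Fin n₂) ℂ) (α : ℂ)
    (u : ℕ → Fin n₁ → ℂ) (v : ℕ → Fin n₂ → ℂ)
    (hu0 : u 0 = 0)
    (hu : ∀ i : ℕ, 1 ≤ i → i ≤ d₁ → (A - α • B).mulVec (u i) = B.mulVec (u (i - 1)))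
    (hv0 : v 0 = 0)
    (hv : ∀ i : ℕ, 1 ≤ i → i ≤ d₂ → (C - α • D).mulVec (v i) = D.mulVec (v (i - 1))) :
    ∀ j : ℕ, 1 ≤ j → j ≤ min d₁ d₂ →
      (A ⊗ₖ D - B ⊗ₖ C).mulVec (∑ i ∈ Finset.Icc 1 j, vkron (u i) (v (j + 1 - i))) = 0 := by
  intro j _ hj
  obtain ⟨hjd₁, hjd₂⟩ := le_min_iff.mp hj
  set w : ℕ → Fin n₁ × Fin n₂ → ℂ := fun i => vkron (B *ᵥ u i) (D *ᵥ v (j - i))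
  have hterm : ∀ i ∈ Icc 1 j,
      (A ⊗ₖ D - B ⊗ₖ C) *ᵥ vkron (u i) (v (j + 1 - i)) = w (i - 1) - w i := by
    intro i hi
    obtain ⟨hi1, hij⟩ := mem_Icc.mp hi
    rw [kronecker_sub_mulVec_vkron_of_chain_step (hu i hi1 (by omega))
      (hv (j + 1 - i) (by omega) (by omega))]
    simp only [w, show j - (i - 1) = j + 1 - i by omega, show j + 1 - i - 1 = j - i by omega]
  rw [mulVec_sum, sum_congr rfl hterm, sum_Icc_one_sub_eq_sub]
  simp [w, hu0, hv0, vkron_zero_left, vkron_zero_right]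

/-- **Kernel vectors of `Δ = A ⊗ D − B ⊗ C` from a pair of Jordan blocks with equal
eigenvalues.** If `u₀ = 0`, `(A − αB)uᵢ = B u_{i−1}` for `1 ≤ i ≤ d₁`, `v₀ = 0`, and
`(C − αD)vᵢ = D v_{i−1}` for `1 ≤ i ≤ d₂`, then for every `1 ≤ j ≤ min(d₁,d₂)` the
vector `z_j = ∑_{i=1}^{j} uᵢ ⊗ v_{j+1−i}` lies in the kernel of `A ⊗ D − B ⊗ C`. -/
theorem jordan_pair_kernel_vectors {n₁ n₂ d₁ d₂ : ℕ} (hd₁ : 1 ≤ d₁) (hd₂ : 1 ≤ d₂)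
    (A B : Matrix (Fin n₁) (Fin n₁) ℂ) (C D : Matrix (Fin n₂) (Fin n₂) ℂ) (α : ℂ)
    (u : ℕ → Fin n₁ → ℂ) (v : ℕ → Fin n₂ → ℂ)
    (hu0 : u 0 = 0)
    (hu : ∀ i : ℕ, 1 ≤ i → i ≤ d₁ → (A - α • B).mulVec (u i) = B.mulVec (u (i - 1)))
    (hv0 : v 0 = 0)
    (hv : ∀ i : ℕ, 1 ≤ i → i ≤ d₂ → (C - α • D).mulVec (v i) = D.mulVec (v (i - 1))) :
    ∀ j : ℕ, 1 ≤ j → j ≤ min d₁ d₂ →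
      (A ⊗ₖ D - B ⊗ₖ C).mulVec (∑ i ∈ Finset.Icc 1 j, vkron (u i) (v (j + 1 - i))) = 0 :=
  jordan_pair_kernel_vectors_general A B C D α u v hu0 hu hv0 hv
end

section
/- Let u₁, …, u_{d₁} ∈ ℂ^{n₁} be linearly independent vectors and v₁, …, v_{d₂} ∈ ℂ^{n₂} be linearly independent vectors, and set d = min(d₁, d₂). Then the vectors z_j = ∑_{i=1}^{j} u_i ⊗ v_{j+1−i} ∈ ℂ^{n₁ n₂}, j = 1, …, d, are linearly independent. -/
open Finset

lemma kron_linearIndependent {n₁ n₂ d₁ d₂ : ℕ}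
    (u : ℕ → Fin n₁ → ℂ) (v : ℕ → Fin n₂ → ℂ)
    (hu : LinearIndependent ℂ (fun i : Fin d₁ => u ((i : ℕ) + 1)))
    (hv : LinearIndependent ℂ (fun i : Fin d₂ => v ((i : ℕ) + 1))) :
    LinearIndependent ℂ (fun p : Fin d₁ × Fin d₂ =>
      vkron (u ((p.1 : ℕ) + 1)) (v ((p.2 : ℕ) + 1))) := by
  rw [Fintype.linearIndependent_iff]
  intro g hg p
  have h1 : ∀ (a : Fin n₁) (k : Fin d₂),
      ∑ i : Fin d₁, g (i, k) * u ((i : ℕ) + 1) a = 0 := by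
    intro a k
    refine Fintype.linearIndependent_iff.mp hv
      (fun k => ∑ i : Fin d₁, g (i, k) * u ((i : ℕ) + 1) a) ?_ k
    funext b
    have h := congrFun hg (a, b)
    simp only [Finset.sum_apply, Pi.smul_apply, Pi.zero_apply, smul_eq_mul, vkron,
      Fintype.sum_prod_type] at h ⊢
    rw [← h, Finset.sum_comm]
    congr 1; funext i
    rw [Finset.sum_mul]
    congr 1; funext j
    ring
  have h2 : ∑ i : Fin d₁, g (i, p.2) • u ((i : ℕ) + 1) = 0 := by
    funext a
    simpa using h1 a p.2
  exact Fintype.linearIndependent_iff.mp hu (fun i => g (i, p.2)) h2 p.1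

/-- **Linear independence of the associated vectors.** If `u₁, …, u_{d₁}` are linearly
independent and `v₁, …, v_{d₂}` are linearly independent, then the vectors
`z_j = ∑_{i=1}^{j} uᵢ ⊗ v_{j+1−i}`, `j = 1, …, min(d₁,d₂)`, are linearly
independent. -/
theorem assoc_vectors_linearIndependent {n₁ n₂ d₁ d₂ : ℕ}
    (u : ℕ → Fin n₁ → ℂ) (v : ℕ → Fin n₂ → ℂ)
    (hu : LinearIndependent ℂ (fun i : Fin d₁ => u ((i : ℕ) + 1)))
    (hv : LinearIndependent ℂ (fun i : Fin d₂ => v ((i : ℕ) + 1))) :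
    LinearIndependent ℂ (fun j : Fin (min d₁ d₂) =>
      ∑ i ∈ Finset.Icc 1 ((j : ℕ) + 1), vkron (u i) (v ((j : ℕ) + 2 - i))) := by
  have hk := kron_linearIndependent u v hu hv
  rw [Fintype.linearIndependent_iff] at hk ⊢
  intro c hc j
  have hd₁ : min d₁ d₂ ≤ d₁ := min_le_left _ _
  have hd₂ : min d₁ d₂ ≤ d₂ := min_le_right _ _
  have h0 : (0 : ℕ) < d₂ := by have := j.2; omega
  set g : Fin d₁ × Fin d₂ → ℂ := fun p =>
    if h : (p.1 : ℕ) + (p.2 : ℕ) < min d₁ d₂ then c ⟨(p.1 : ℕ) + (p.2 : ℕ), h⟩ else 0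
    with hgdef
  have hg : ∑ p : Fin d₁ × Fin d₂,
      g p • vkron (u ((p.1 : ℕ) + 1)) (v ((p.2 : ℕ) + 1)) = 0 := by
    rw [← hc]
    rw [show (∑ j : Fin (min d₁ d₂), c j • ∑ i ∈ Finset.Icc 1 ((j : ℕ) + 1),
        vkron (u i) (v ((j : ℕ) + 2 - i)))
      = ∑ j : Fin (min d₁ d₂), ∑ i ∈ Finset.Icc 1 ((j : ℕ) + 1),
        c j • vkron (u i) (v ((j : ℕ) + 2 - i)) by
      simp [Finset.smul_sum]]
    rw [Finset.sum_sigma' Finset.univ (fun j : Fin (min d₁ d₂) => Finset.Icc 1 ((j : ℕ) + 1))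
      (fun j i => c j • vkron (u i) (v ((j : ℕ) + 2 - i)))]
    rw [← Finset.sum_filter_of_ne (p := fun p : Fin d₁ × Fin d₂ =>
        (p.1 : ℕ) + (p.2 : ℕ) < min d₁ d₂) (s := Finset.univ)
        (f := fun p => g p • vkron (u ((p.1 : ℕ) + 1)) (v ((p.2 : ℕ) + 1)))
        (by intro p _ hne; by_contra hlt
            exact hne (by rw [hgdef]; simp only [dif_neg hlt, zero_smul]))]
    refine Finset.sum_bij'
      (fun (p : Fin d₁ × Fin d₂) hp =>
        (⟨⟨(p.1 : ℕ) + (p.2 : ℕ), by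
            simp only [Finset.mem_filter, Finset.mem_univ, true_and] at hp; exact hp⟩,
          (p.1 : ℕ) + 1⟩ : Σ _ : Fin (min d₁ d₂), ℕ))
      (fun x hx =>
        (⟨⟨x.2 - 1, by
            simp only [Finset.mem_sigma, Finset.mem_univ, true_and, Finset.mem_Icc] at hx
            have := x.1.2; omega⟩,
          ⟨(x.1 : ℕ) + 1 - x.2, by
            simp only [Finset.mem_sigma, Finset.mem_univ, true_and, Finset.mem_Icc] at hx
            have := x.1.2; omega⟩⟩ : Fin d₁ × Fin d₂))
      ?_ ?_ ?_ ?_ ?_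
    · intro p hp
      simp only [Finset.mem_filter, Finset.mem_univ, true_and] at hp
      simp only [Finset.mem_sigma, Finset.mem_univ, true_and, Finset.mem_Icc]
      omega
    · intro x hx
      simp only [Finset.mem_sigma, Finset.mem_univ, true_and, Finset.mem_Icc] at hx
      simp only [Finset.mem_filter, Finset.mem_univ, true_and]
      have := x.1.2
      omega
    · intro p hp
      simp only [Finset.mem_filter, Finset.mem_univ, true_and] at hp
      have h1 : (p.1 : ℕ) + 1 - 1 = (p.1 : ℕ) := by omega
      have h2 : (p.1 : ℕ) + (p.2 : ℕ) + 1 - ((p.1 : ℕ) + 1) = (p.2 : ℕ) := by omega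
      ext <;> simp [h1, h2]
    · intro x hx
      simp only [Finset.mem_sigma, Finset.mem_univ, true_and, Finset.mem_Icc] at hx
      ext
      · simp; omega
      · simp; omega
    · intro p hp
      simp only [Finset.mem_filter, Finset.mem_univ, true_and] at hp
      have h1 : ((p.1 : ℕ) + (p.2 : ℕ)) + 2 - ((p.1 : ℕ) + 1) = (p.2 : ℕ) + 1 := by omega
      simp only [hgdef, dif_pos hp, h1]
  have := hk g hg (⟨(j : ℕ), lt_of_lt_of_le j.2 hd₁⟩, ⟨0, h0⟩)
  rw [hgdef] at this
  simpa [j.2] using this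
end

section
/- For i = 1,2, let A_i, B_i, C_i be n_i × n_i complex matrices with characteristic polynomials p_i(λ,μ) = det(A_i + λB_i + μC_i) not identically zero. Suppose (λ₀, μ₀) ∈ ℂ² satisfies p₁(λ₀,μ₀) = p₂(λ₀,μ₀) = 0 and is an isolated common zero, i.e., there is ε > 0 such that no (λ,μ) ≠ (λ₀,μ₀) with |λ − λ₀| + |μ − μ₀| < ε satisfies p₁(λ,μ) = p₂(λ,μ) = 0. Then (λ₀,μ₀) is a finite eigenvalue of the two-parameter problem: there exist nonzero x₁ ∈ ℂ^{n₁}, x₂ ∈ ℂ^{n₂} with W₁(λ₀,μ₀)x₁ = 0 and W₂(λ₀,μ₀)x₂ = 0, and q(λ₀,μ₀) ≠ 0 for every nonconstant common divisor q ∈ ℂ[λ,μ] of p₁ and p₂. -/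
open Matrix

noncomputable section

section Aux

open Polynomial


lemma exists_root_near (p : Polynomial ℂ) (hd : 1 ≤ p.natDegree) (z : ℂ) :
    ∃ r : ℂ, p.IsRoot r ∧ ‖p.leadingCoeff‖₊ * ‖z - r‖₊ ^ p.natDegree ≤ ‖p.eval z‖₊ := by
  have hp0 : p ≠ 0 := fun h => by simp [h] at hd
  have hs : p.Splits := IsAlgClosed.splits p
  have hcard : p.natDegree = Multiset.card p.roots := by
    simpa using hs.natDegree_eq_card_roots
  have hne : p.roots ≠ 0 := by
    intro h
    rw [h] at hcard
    simp at hcard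
    omega
  obtain ⟨r, hrmem, hrmin⟩ := p.roots.toFinset.exists_min_image (fun a => ‖z - a‖₊)
    (Multiset.toFinset_nonempty.2 hne)
  refine ⟨r, (Polynomial.mem_roots hp0).1 (Multiset.mem_toFinset.1 hrmem), ?_⟩
  have heq := hs.eq_prod_roots
  have heval : p.eval z = p.leadingCoeff * ((p.roots.map fun a => z - a).prod) := by
    conv_lhs => rw [heq]
    simp [Polynomial.eval_multiset_prod, Multiset.map_map, Function.comp]
  have hnorm : ‖p.eval z‖₊ = ‖p.leadingCoeff‖₊ * ((p.roots.map fun a => ‖z - a‖₊).prod) := by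
    rw [heval, nnnorm_mul]
    congr 1
    rw [show (Multiset.map (fun a => ‖z - a‖₊) p.roots)
        = Multiset.map (fun x : ℂ => ‖x‖₊) (Multiset.map (fun a => z - a) p.roots) by
      rw [Multiset.map_map]; rfl]
    exact map_multiset_prod (nnnormHom.toMonoidHom : ℂ →* NNReal) _
  rw [hnorm]
  refine mul_le_mul_right ?_ _
  have hbound : ∀ x ∈ p.roots.map (fun a => ‖z - a‖₊), ‖z - r‖₊ ≤ x := by
    intro x hx
    obtain ⟨a, ha, rfl⟩ := Multiset.mem_map.1 hx
    exact hrmin a (Multiset.mem_toFinset.2 ha)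
  have := Multiset.pow_card_le_prod hbound
  rwa [Multiset.card_map, ← hcard] at this

lemma sum_fin2 (s : Fin 2 →₀ ℕ) : (s.sum fun _ e => e) = s 0 + s 1 := by
  rw [Finsupp.sum_fintype _ _ (fun _ => rfl), Fin.sum_univ_two]

lemma fin2_finsupp_ext {s u : Fin 2 →₀ ℕ} (h0 : s 0 = u 0) (h1 : s 1 = u 1) : s = u := by
  ext i
  fin_cases i
  · exact h0
  · exact h1

lemma nonisolated (q : MvPolynomial (Fin 2) ℂ) (hq : ¬∃ c : ℂ, q = MvPolynomial.C c)
    (l₀ m₀ : ℂ) (h00 : ev2 q l₀ m₀ = 0) {ε : ℝ} (hε : 0 < ε) :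
    ∃ l m : ℂ, (l, m) ≠ (l₀, m₀) ∧ ‖l - l₀‖ + ‖m - m₀‖ < ε ∧ ev2 q l m = 0 := by
  classical
  have hq0 : q ≠ 0 := fun h => hq ⟨0, by simp [h]⟩
  set d := q.totalDegree with hd_def
  -- `d ≥ 1`
  have hd1 : 1 ≤ d := by
    by_contra h
    have hd0 : d = 0 := by omega
    refine hq ⟨MvPolynomial.coeff 0 q, ?_⟩
    have hz := (MvPolynomial.totalDegree_eq_zero_iff _ q).1 hd0
    ext s
    by_cases hs : s = 0
    · subst hs; simp
    · rw [MvPolynomial.coeff_C, if_neg (fun h => hs h.symm)]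
      by_contra hc
      have hmem : s ∈ q.support := MvPolynomial.mem_support_iff.2 hc
      exact hs (Finsupp.ext fun i => hz s hmem i)
  -- top-degree monomial
  have hsupp : q.support.Nonempty := by
    exact MvPolynomial.support_nonempty.2 hq0
  obtain ⟨s₀, hs₀mem, hs₀sum⟩ :=
    Finset.exists_mem_eq_sup q.support hsupp (fun s => s.sum fun _ e => e)
  set F := q.support.filter (fun s => s 0 + s 1 = d) with hF_def
  have hs₀F : s₀ ∈ F := Finset.mem_filter.2 ⟨hs₀mem, by rw [← sum_fin2]; exact hs₀sum.symm⟩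
  -- the polynomial whose nonvanishing picks a good shear `t`
  set ht : Polynomial ℂ := ∑ s ∈ F, Polynomial.C (MvPolynomial.coeff s q) * Polynomial.X ^ (s 0)
    with hht_def
  have htne : ht ≠ 0 := by
    intro h
    have hc : ht.coeff (s₀ 0) = MvPolynomial.coeff s₀ q := by
      rw [hht_def, Polynomial.finset_sum_coeff, Finset.sum_eq_single s₀]
      · simp
      · intro s hsF hne
        have hs0 : s₀ 0 ≠ s 0 := by
          intro he
          apply hne
          have h1 : s 0 + s 1 = d := (Finset.mem_filter.1 hsF).2
          have h2 : s₀ 0 + s₀ 1 = d := (Finset.mem_filter.1 hs₀F).2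
          exact fin2_finsupp_ext (by omega) (by omega)
        simp [Polynomial.coeff_X_pow, if_neg hs0]
      · intro h; exact absurd hs₀F h
    rw [h] at hc
    simp only [Polynomial.coeff_zero] at hc
    exact (MvPolynomial.mem_support_iff.1 hs₀mem) hc.symm
  obtain ⟨t, h0tne⟩ : ∃ t : ℂ, Polynomial.eval t ht ≠ 0 := by
    by_contra h
    push_neg at h
    exact htne (Polynomial.eq_zero_of_infinite_isRoot ht
      (Set.infinite_of_injective_forall_mem (f := fun x : ℕ => (x : ℂ))
        (fun a b hab => Nat.cast_injective hab) (fun x => h x)))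
  set h0t : ℂ := Polynomial.eval t ht with hh0t_def
  -- the sheared polynomial as an element of ℂ[x][y]
  set u : Polynomial (Polynomial ℂ) :=
    Polynomial.C (Polynomial.C l₀ + Polynomial.X) + Polynomial.C (Polynomial.C t) * Polynomial.X
    with hu_def
  set w : Polynomial (Polynomial ℂ) := Polynomial.C (Polynomial.C m₀) + Polynomial.X with hw_def
  set v : Fin 2 → Polynomial (Polynomial ℂ) := ![u, w] with hv_def
  set G : Polynomial (Polynomial ℂ) := MvPolynomial.aeval v q with hG_def
  set P : ℂ → Polynomial ℂ := fun l => G.map (Polynomial.evalRingHom l) with hP_def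
  -- evaluation identity
  have hPeval : ∀ l m : ℂ, (P l).eval m = ev2 q (l₀ + l + t * m) (m₀ + m) := by
    intro l m
    have hLHS : (P l).eval m =
        ((Polynomial.evalRingHom m).comp (Polynomial.mapRingHom (Polynomial.evalRingHom l))) G :=
      rfl
    rw [hLHS, hG_def, MvPolynomial.aeval_def, MvPolynomial.eval₂_comp_left]
    rw [ev2, MvPolynomial.eval, MvPolynomial.coe_eval₂Hom]
    congr 1
    · ext c
      simp [Polynomial.algebraMap_apply]
    · funext i
      fin_cases i
      · simp [hv_def, hu_def]
      · simp [hv_def, hw_def]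
  -- degree bounds for u and w
  have hu1 : u.natDegree ≤ 1 := by
    refine (Polynomial.natDegree_add_le _ _).trans ?_
    simp only [Polynomial.natDegree_C, max_le_iff]
    exact ⟨Nat.zero_le 1, (Polynomial.natDegree_C_mul_le _ _).trans (by simp)⟩
  have hw1 : w.natDegree ≤ 1 := by
    refine (Polynomial.natDegree_add_le _ _).trans ?_
    simp
  have hu_coeff1 : u.coeff 1 = Polynomial.C t := by
    simp [hu_def, Polynomial.coeff_C]
  have hw_coeff1 : w.coeff 1 = 1 := by
    simp [hw_def, Polynomial.coeff_C]
  have hterm_deg : ∀ s : Fin 2 →₀ ℕ, (u ^ s 0 * w ^ s 1).natDegree ≤ s 0 + s 1 := by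
    intro s
    refine (Polynomial.natDegree_mul_le).trans (add_le_add ?_ ?_)
    · exact (Polynomial.natDegree_pow_le).trans ((mul_le_mul_right hu1 _).trans_eq (mul_one _))
    · exact (Polynomial.natDegree_pow_le).trans ((mul_le_mul_right hw1 _).trans_eq (mul_one _))
  -- G as a sum over the support
  have hG_as_sum : G = ∑ s ∈ q.support,
      Polynomial.C (Polynomial.C (MvPolynomial.coeff s q)) * (u ^ s 0 * w ^ s 1) := by
    rw [hG_def]
    conv_lhs => rw [MvPolynomial.as_sum q]
    rw [map_sum]
    refine Finset.sum_congr rfl fun s hs => ?_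
    rw [MvPolynomial.aeval_monomial, Finsupp.prod_pow, Fin.prod_univ_two]
    simp only [hv_def, Matrix.cons_val_zero, Matrix.cons_val_one, Matrix.head_cons]
    rw [Polynomial.algebraMap_apply, Polynomial.algebraMap_apply]
    norm_num
  have hGcoeff : ∀ j, G.coeff j = ∑ s ∈ q.support,
      Polynomial.C (MvPolynomial.coeff s q) * ((u ^ s 0 * w ^ s 1).coeff j) := by
    intro j
    rw [hG_as_sum, Polynomial.finset_sum_coeff]
    exact Finset.sum_congr rfl fun s _ => by rw [Polynomial.coeff_C_mul]
  have hsum_le : ∀ s ∈ q.support, s 0 + s 1 ≤ d := by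
    intro s hs
    rw [← sum_fin2]
    exact MvPolynomial.le_totalDegree hs
  -- vanishing of high coefficients
  have hC1 : ∀ j, d < j → G.coeff j = 0 := by
    intro j hj
    rw [hGcoeff]
    refine Finset.sum_eq_zero fun s hs => ?_
    rw [Polynomial.coeff_eq_zero_of_natDegree_lt ((hterm_deg s).trans_lt (by
      have := hsum_le s hs; omega)), mul_zero]
  -- the top coefficient
  have hC2 : G.coeff d = Polynomial.C h0t := by
    rw [hGcoeff d, ← Finset.sum_filter_add_sum_filter_not q.support (fun s => s 0 + s 1 = d)]
    have h2 : ∑ s ∈ q.support.filter (fun s => ¬ s 0 + s 1 = d),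
        Polynomial.C (MvPolynomial.coeff s q) * ((u ^ s 0 * w ^ s 1).coeff d) = 0 := by
      refine Finset.sum_eq_zero fun s hs => ?_
      obtain ⟨hs1, hs2⟩ := Finset.mem_filter.1 hs
      rw [Polynomial.coeff_eq_zero_of_natDegree_lt ((hterm_deg s).trans_lt (by
        have := hsum_le s hs1; omega)), mul_zero]
    rw [h2, add_zero]
    have h1 : ∀ s ∈ F, Polynomial.C (MvPolynomial.coeff s q) * ((u ^ s 0 * w ^ s 1).coeff d)
        = Polynomial.C (MvPolynomial.coeff s q * t ^ s 0) := by
      intro s hs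
      have hsd : s 0 + s 1 = d := (Finset.mem_filter.1 hs).2
      have e1 : (u ^ s 0).natDegree ≤ s 0 :=
        (Polynomial.natDegree_pow_le).trans ((mul_le_mul_right hu1 _).trans_eq (mul_one _))
      have e2 : (w ^ s 1).natDegree ≤ s 1 :=
        (Polynomial.natDegree_pow_le).trans ((mul_le_mul_right hw1 _).trans_eq (mul_one _))
      rw [← hsd, Polynomial.coeff_mul_add_eq_of_natDegree_le e1 e2]
      have e3 : (u ^ s 0).coeff (s 0) = Polynomial.C t ^ s 0 := by
        have := Polynomial.coeff_pow_of_natDegree_le (p := u) (n := 1) (m := s 0) hu1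
        rw [mul_one] at this
        rw [this, hu_coeff1]
      have e4 : (w ^ s 1).coeff (s 1) = 1 := by
        have := Polynomial.coeff_pow_of_natDegree_le (p := w) (n := 1) (m := s 1) hw1
        rw [mul_one] at this
        rw [this, hw_coeff1, one_pow]
      rw [e3, e4, mul_one, ← Polynomial.C_pow, ← Polynomial.C_mul]
    rw [Finset.sum_congr rfl h1, ← map_sum, hh0t_def, hht_def]
    congr 1
    rw [Polynomial.eval_finset_sum]
    exact Finset.sum_congr rfl fun s _ => by simp
  have hCne : (Polynomial.C h0t : Polynomial ℂ) ≠ 0 := by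
    simpa using h0tne
  have hGd_ne : G.coeff d ≠ 0 := by rw [hC2]; exact hCne
  -- properties of the slices P l
  have hPcoeff : ∀ (l : ℂ) (j : ℕ), (P l).coeff j = (G.coeff j).eval l := by
    intro l j
    simp [hP_def, Polynomial.coeff_map]
  have hPd : ∀ l : ℂ, (P l).coeff d = h0t := by
    intro l
    rw [hPcoeff, hC2, Polynomial.eval_C]
  have hPdeg : ∀ l : ℂ, (P l).natDegree = d := by
    intro l
    refine le_antisymm (Polynomial.natDegree_le_iff_coeff_eq_zero.2 fun j hj => ?_)
      (Polynomial.le_natDegree_of_ne_zero (by rw [hPd]; exact h0tne))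
    rw [hPcoeff, hC1 j hj, Polynomial.eval_zero]
  have hPlead : ∀ l : ℂ, (P l).leadingCoeff = h0t := by
    intro l
    rw [Polynomial.leadingCoeff, hPdeg, hPd]
  -- continuity setup
  set gc : Polynomial ℂ := G.coeff 0 with hgc_def
  have hPeval0 : ∀ l : ℂ, (P l).eval 0 = gc.eval l := by
    intro l
    rw [← Polynomial.coeff_zero_eq_eval_zero, hPcoeff]
  have hgc0 : gc.eval 0 = 0 := by
    have := hPeval 0 0
    rw [hPeval0] at this
    simpa using this.trans (by simpa using h00)
  set T1 : ℝ := 1 + ‖t‖ with hT1_def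
  have hT1 : 0 < T1 := by positivity
  set ρ : ℝ := ε / (2 * T1) with hρ_def
  have hρ : 0 < ρ := by positivity
  set B : ℝ := ‖h0t‖ * ρ ^ d with hB_def
  have hB : 0 < B := by
    have : 0 < ‖h0t‖ := norm_pos_iff.2 h0tne
    positivity
  obtain ⟨δ, hδpos, hδ⟩ := Metric.continuousAt_iff.1 (Polynomial.continuous gc).continuousAt B hB
  set α : ℝ := min δ (ε / 2) / 2 with hα_def
  have hαpos : 0 < α := by
    have h1 : 0 < min δ (ε / 2) := lt_min hδpos (by positivity)
    positivity
  have hαδ : α < δ := by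
    have := min_le_left δ (ε / 2)
    rw [hα_def]; linarith
  have hαε : α < ε / 2 := by
    have := min_le_right δ (ε / 2)
    rw [hα_def]; linarith
  set l : ℂ := (α : ℂ) with hl_def
  have hlnorm : ‖l‖ = α := by
    rw [hl_def]
    rw [Complex.norm_real, Real.norm_eq_abs, abs_of_pos hαpos]
  have hlne : l ≠ 0 := by
    rw [hl_def]
    exact_mod_cast ne_of_gt hαpos
  -- apply the root-location lemma
  obtain ⟨r, hroot, hrbound⟩ := exists_root_near (P l) (by rw [hPdeg]; exact hd1) 0
  have hrboundR : ‖h0t‖ * ‖r‖ ^ d ≤ ‖(P l).eval 0‖ := by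
    have := hrbound
    rw [hPlead, hPdeg] at this
    have h2 : ‖(0 : ℂ) - r‖₊ = ‖r‖₊ := by simp
    rw [h2] at this
    exact_mod_cast this
  have hsmall : ‖(P l).eval 0‖ < B := by
    rw [hPeval0]
    have hdist : dist l 0 < δ := by rwa [dist_zero_right, hlnorm]
    have := hδ hdist
    rwa [dist_eq_norm, hgc0, sub_zero] at this
  have hr_lt : ‖r‖ < ρ := by
    by_contra hcon
    push_neg at hcon
    have h1 : ρ ^ d ≤ ‖r‖ ^ d := pow_le_pow_left₀ (le_of_lt hρ) hcon d
    have h2 : B ≤ ‖h0t‖ * ‖r‖ ^ d := by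
      rw [hB_def]
      exact mul_le_mul_of_nonneg_left h1 (norm_nonneg _)
    linarith [hrboundR.trans_lt hsmall]
  -- conclude
  refine ⟨l₀ + l + t * r, m₀ + r, ?_, ?_, ?_⟩
  · intro hcon
    rw [Prod.mk.injEq] at hcon
    obtain ⟨h1, h2⟩ := hcon
    have hr0 : r = 0 := by
      have := h2
      rwa [add_eq_left] at this
    rw [hr0, mul_zero, add_zero, add_eq_left] at h1
    exact hlne h1
  · have e1 : l₀ + l + t * r - l₀ = l + t * r := by ring
    have e2 : m₀ + r - m₀ = r := by ring
    rw [e1, e2]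
    have h1 : ‖l + t * r‖ ≤ ‖l‖ + ‖t‖ * ‖r‖ := by
      refine (norm_add_le _ _).trans ?_
      rw [norm_mul]
    have h2 : ‖l‖ + ‖t‖ * ‖r‖ + ‖r‖ < ε / 2 + T1 * ρ := by
      have h3 : ‖t‖ * ‖r‖ + ‖r‖ = T1 * ‖r‖ := by rw [hT1_def]; ring
      have h4 : T1 * ‖r‖ < T1 * ρ := by
        exact (mul_lt_mul_iff_right₀ hT1).2 hr_lt
      rw [hlnorm, add_assoc, h3]
      exact add_lt_add hαε h4
    have h5 : T1 * ρ = ε / 2 := by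
      rw [hρ_def]
      field_simp
    linarith
  · rw [← hPeval l r]
    exact hroot

lemma ev2_mul (p r : MvPolynomial (Fin 2) ℂ) (l m : ℂ) :
    ev2 (p * r) l m = ev2 p l m * ev2 r l m := by
  simp [ev2]

lemma det_Wmat {n : ℕ} (A B C : Matrix (Fin n) (Fin n) ℂ) (l m : ℂ) :
    ev2 (charPoly A B C) l m = (Wmat A B C l m).det := by
  rw [ev2, charPoly]
  rw [RingHom.map_det (MvPolynomial.eval ![l, m])]
  congr 1
  ext i j
  simp [Wmat, Matrix.map_apply, Matrix.add_apply, Matrix.smul_apply, smul_eq_mul]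

end Aux

/-- **Isolated common zeros of the characteristic polynomials are finite
eigenvalues.** If `p₁, p₂` are not identically zero, `p₁(λ₀,μ₀) = p₂(λ₀,μ₀) = 0`,
and `(λ₀,μ₀)` is an isolated common zero of `p₁` and `p₂`, then there exist nonzero
`x₁, x₂` with `W₁(λ₀,μ₀)x₁ = 0`, `W₂(λ₀,μ₀)x₂ = 0`, and `q(λ₀,μ₀) ≠ 0` for every
nonconstant common divisor `q` of `p₁` and `p₂`. -/
theorem isolated_common_zero_is_eigenvalue {n₁ n₂ : ℕ}
    (A₁ B₁ C₁ : Matrix (Fin n₁) (Fin n₁) ℂ) (A₂ B₂ C₂ : Matrix (Fin n₂) (Fin n₂) ℂ)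
    (l₀ m₀ : ℂ)
    (hreg₁ : charPoly A₁ B₁ C₁ ≠ 0) (hreg₂ : charPoly A₂ B₂ C₂ ≠ 0)
    (hz₁ : ev2 (charPoly A₁ B₁ C₁) l₀ m₀ = 0)
    (hz₂ : ev2 (charPoly A₂ B₂ C₂) l₀ m₀ = 0)
    (hisol : ∃ ε > (0:ℝ), ∀ l m : ℂ, (l, m) ≠ (l₀, m₀) → ‖l - l₀‖ + ‖m - m₀‖ < ε →
      ¬(ev2 (charPoly A₁ B₁ C₁) l m = 0 ∧ ev2 (charPoly A₂ B₂ C₂) l m = 0)) :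
    (∃ x₁ : Fin n₁ → ℂ, x₁ ≠ 0 ∧ (Wmat A₁ B₁ C₁ l₀ m₀).mulVec x₁ = 0) ∧
    (∃ x₂ : Fin n₂ → ℂ, x₂ ≠ 0 ∧ (Wmat A₂ B₂ C₂ l₀ m₀).mulVec x₂ = 0) ∧
    (∀ q : MvPolynomial (Fin 2) ℂ,
      q ∣ charPoly A₁ B₁ C₁ → q ∣ charPoly A₂ B₂ C₂ →
      (¬ ∃ c : ℂ, q = MvPolynomial.C c) → ev2 q l₀ m₀ ≠ 0) := by
  refine ⟨?_, ?_, ?_⟩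
  · obtain ⟨x, hx0, hxv⟩ := Matrix.exists_mulVec_eq_zero_iff.2
      ((det_Wmat A₁ B₁ C₁ l₀ m₀).symm.trans hz₁)
    exact ⟨x, hx0, hxv⟩
  · obtain ⟨x, hx0, hxv⟩ := Matrix.exists_mulVec_eq_zero_iff.2
      ((det_Wmat A₂ B₂ C₂ l₀ m₀).symm.trans hz₂)
    exact ⟨x, hx0, hxv⟩
  · intro q hq1 hq2 hqnc hzero
    obtain ⟨ε, hε, hsep⟩ := hisol
    obtain ⟨l, m, hne, hlt, hq0⟩ := nonisolated q hqnc l₀ m₀ hzero hε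
    refine hsep l m hne hlt ⟨?_, ?_⟩
    · obtain ⟨r, hr⟩ := hq1
      rw [hr, ev2_mul, hq0, zero_mul]
    · obtain ⟨r, hr⟩ := hq2
      rw [hr, ev2_mul, hq0, zero_mul]
end
end

section
/- Let A, B be n × n complex matrices and λ₀ ∈ ℂ. The following statements are equivalent: (b) rank(A − λ₀B) < nrank(A − λB); (c) dim GKer(A − λ₀B) < dim ker(A − λ₀B); (d) there exists a vector v with (A − λ₀B)v = 0 and v ∉ GKer(A − λ₀B); (e) there exists a vector v with (A − λ₀B)v = 0 and v ∉ R(A,B). -/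
/-!
The polynomial solutions `p` of `(A − λB) p(λ) = 0` form the kernel `K` of the pencil over `ℂ[λ]`,
a free module of some rank `m`. This kernel is saturated (`(λ − ξ) q ∈ K` forces `q ∈ K`), so a
`ℂ[λ]`-basis of `K` stays linearly independent after evaluation at any `ξ`: `dim GKer(A − ξB) = m`
for every `ξ`. Clearing denominators shows that the kernel of `A − λB` over `ℂ(λ)` has dimension
at most `m`; bringing `A − λB` to rank normal form over `ℂ(λ)`, clearing denominators and evaluating
where they do not vanish yields a point `ξ` with `dim ker(A − ξB) ≤ m`. Hence `nrank = n − m`,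
which gives (b) ⇔ (c) ⇔ (d).

For (e), `GKer(A − ξB) = ker(A − ξB) ∩ R(A,B)`. Indeed `(A − ξB) p(ζ) = (ζ − ξ) B p(ζ)`, and
`B p(ξ)` lies in the closed subspace `(A − ξB) R(A,B)` by continuity from `ζ ≠ ξ`; so
`(A − ξB) R(A,B) = B R(A,B)` for every `ξ`, and `dim (ker(A − ξB) ∩ R(A,B))` does not depend on
`ξ`. At the point found above it is at most `m`.
-/

open Matrix

noncomputable section

open Polynomial

theorem Submodule.finrank_lt_finrank_iff_exists_notMem {K V : Type*} [DivisionRing K]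
    [AddCommGroup V] [Module K V] {p q : Submodule K V} [FiniteDimensional K q] (h : p ≤ q) :
    Module.finrank K p < Module.finrank K q ↔ ∃ v ∈ q, v ∉ p :=
  ⟨fun hlt => SetLike.exists_of_lt (lt_of_le_of_finrank_lt_finrank h hlt),
    fun ⟨v, hvq, hvp⟩ => finrank_lt_finrank_of_lt (SetLike.lt_iff_le_and_exists.2 ⟨h, v, hvq, hvp⟩)⟩

theorem LinearMap.finrank_ker_inf_add_finrank_map {K V W : Type*} [Field K] [AddCommGroup V]
    [Module K V] [AddCommGroup W] [Module K W] (f : V →ₗ[K] W) (p : Submodule K V)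
    [FiniteDimensional K p] :
    Module.finrank K ↥(LinearMap.ker f ⊓ p) + Module.finrank K (p.map f) = Module.finrank K p := by
  rw [← (f.domRestrict p).finrank_range_add_finrank_ker, range_domRestrict, ker_domRestrict,
    add_comm, inf_comm, ← Submodule.map_comap_subtype, Submodule.finrank_map_subtype_eq]

theorem Matrix.rank_add_finrank_ker {K m n : Type*} [Field K] [Fintype n] (M : Matrix m n K) :
    M.rank + Module.finrank K (LinearMap.ker M.mulVecLin) = Fintype.card n := by
  rw [Matrix.rank, LinearMap.finrank_range_add_finrank_ker, Module.finrank_fintype_fun_eq_card]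

theorem Matrix.smul_mem_ker_mulVecLin_iff {R ι κ : Type*} [CommRing R] [IsDomain R] [Fintype κ]
    (P : Matrix ι κ R) {c : R} (hc : c ≠ 0) {p : κ → R} :
    c • p ∈ LinearMap.ker P.mulVecLin ↔ p ∈ LinearMap.ker P.mulVecLin := by
  simp [hc]

theorem IsLocalization.exists_algebraMap_comp_eq_smul {R S : Type*} [CommRing R] [CommRing S]
    [Algebra R S] (M : Submonoid R) [IsLocalization M S] {ι : Type*} [Finite ι] (f : ι → S) :
    ∃ d ∈ M, ∃ g : ι → R, algebraMap R S ∘ g = algebraMap R S d • f := by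
  obtain ⟨d, hd⟩ := exist_integer_multiples_of_finite M f
  choose g hg using hd
  exact ⟨d, d.2, g, funext fun i => by
    rw [Function.comp_apply, hg i, Pi.smul_apply, Algebra.smul_def, smul_eq_mul]⟩

theorem IsLocalization.exists_matrix_map_eq_smul {R S : Type*} [CommRing R] [CommRing S]
    [Algebra R S] (M : Submonoid R) [IsLocalization M S] {ι κ : Type*} [Finite ι] [Finite κ]
    (V : Matrix ι κ S) :
    ∃ d ∈ M, ∃ V' : Matrix ι κ R, V'.map (algebraMap R S) = algebraMap R S d • V := by
  obtain ⟨d, hd, g, hg⟩ := exists_algebraMap_comp_eq_smul M fun ij : ι × κ => V ij.1 ij.2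
  exact ⟨d, hd, Matrix.of fun i j => g (i, j), Matrix.ext fun i j => congrFun hg (i, j)⟩

section PolynomialMatrix

variable {K : Type*} [Field K] {ι κ : Type*}

theorem Polynomial.eq_X_sub_C_smul_divByMonic {ξ : K} {p : κ → K[X]} (hp : ∀ j, (p j).eval ξ = 0) :
    p = (X - C ξ) • fun j => p j /ₘ (X - C ξ) :=
  _root_.funext fun j => (mul_divByMonic_eq_iff_isRoot.2 (hp j)).symm

theorem Polynomial.compLeft_leval_smul (ξ : K) (r : K[X]) (p : κ → K[X]) :
    (leval ξ).compLeft κ (r • p) = r.eval ξ • (leval ξ).compLeft κ p :=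
  _root_.funext fun j => by simp

theorem Matrix.rank_fromBlocks_one_zero_submatrix [Fintype ι] {r s : ℕ} (e : ι ≃ Fin r ⊕ Fin s) :
    ((fromBlocks (1 : Matrix (Fin r) (Fin r) K) 0 0 0).submatrix e e).rank = r := by
  classical
  rw [rank_submatrix, ← diagonal_one, ← diagonal_zero, fromBlocks_diagonal, rank_diagonal,
    Fintype.card_subtype]
  simp [Finset.card_filter, Fintype.sum_sum_type]

theorem Matrix.exists_rank_map_le_rank_map_eval [Infinite K] [Fintype ι] (P : Matrix ι ι K[X]) :
    ∃ ξ : K, (P.map (algebraMap K[X] (RatFunc K))).rank ≤ (P.map (evalRingHom ξ)).rank := by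
  classical
  obtain ⟨V, U, e, -, -, hVPU⟩ := exists_rank_normal_form (P.map (algebraMap K[X] (RatFunc K)))
  obtain ⟨d, hd, V', hV'⟩ := IsLocalization.exists_matrix_map_eq_smul (nonZeroDivisors K[X]) V
  obtain ⟨d', hd', U', hU'⟩ := IsLocalization.exists_matrix_map_eq_smul (nonZeroDivisors K[X]) U
  set N : Matrix ι ι K := (fromBlocks 1 0 0 0).submatrix e e
  have hN : V' * P * U' = (d * d') • N.map C := by
    refine Matrix.map_injective (IsFractionRing.injective K[X] (RatFunc K)) ?_
    dsimp only
    rw [Matrix.map_mul, Matrix.map_mul, hV', hU']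
    simp only [smul_mul_assoc, mul_smul_comm, smul_smul, hVPU]
    rw [Matrix.map_smul' _ _ _ (map_mul _), map_mul, mul_comm, Matrix.map_map]
    congr 1
    rw [← submatrix_map, fromBlocks_map, Matrix.map_one _ (by simp) (by simp),
      Matrix.map_zero _ (by simp), Matrix.map_zero _ (by simp), Matrix.map_zero _ (by simp)]
  obtain ⟨ξ, hξ⟩ : ∃ ξ, (d * d').eval ξ ≠ 0 := by
    by_contra! h
    exact mul_ne_zero (nonZeroDivisors.ne_zero hd) (nonZeroDivisors.ne_zero hd')
      (Polynomial.funext (by simpa using h))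
  refine ⟨ξ, ?_⟩
  have hNξ : V'.map (evalRingHom ξ) * P.map (evalRingHom ξ) * U'.map (evalRingHom ξ)
      = (d * d').eval ξ • N := by
    rw [← Matrix.map_mul, ← Matrix.map_mul, hN]
    ext i j
    simp
  calc (P.map (algebraMap K[X] (RatFunc K))).rank = N.rank :=
        (rank_fromBlocks_one_zero_submatrix e).symm
    _ = ((d * d').eval ξ • N).rank :=
      (rank_smul_of_mem_nonZeroDivisors N (mem_nonZeroDivisors_of_ne_zero hξ)).symm
    _ ≤ (P.map (evalRingHom ξ)).rank := by
      rw [← hNξ]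
      exact (rank_mul_le_left _ _).trans (rank_mul_le_right _ _)

variable [Fintype κ]

theorem Matrix.mulVec_eq_zero_iff_forall_eval [Infinite K] (P : Matrix ι κ K[X]) (p : κ → K[X]) :
    P *ᵥ p = 0 ↔ ∀ t : K, P.map (evalRingHom t) *ᵥ (fun j => (p j).eval t) = 0 := by
  have key : ∀ t i, ((P *ᵥ p) i).eval t = (P.map (evalRingHom t) *ᵥ fun j => (p j).eval t) i :=
    fun t i => RingHom.map_mulVec (evalRingHom t) P p i
  refine ⟨fun h t => funext fun i => ?_, fun h => funext fun i => Polynomial.funext fun t => ?_⟩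
  · rw [← key, h, Pi.zero_apply, eval_zero, Pi.zero_apply]
  · rw [key, h, Pi.zero_apply, Pi.zero_apply, eval_zero]

theorem Matrix.linearIndependent_eval_basis_ker {ι' : Type*} [Fintype ι'] (P : Matrix ι κ K[X])
    (b : Module.Basis ι' K[X] (LinearMap.ker P.mulVecLin)) (ξ : K) :
    LinearIndependent K fun i => (leval ξ).compLeft κ (b i : κ → K[X]) := by
  rw [Fintype.linearIndependent_iff]
  intro c hc i
  set q : LinearMap.ker P.mulVecLin := ∑ i, C (c i) • b i
  have hq : ∀ j, ((q : κ → K[X]) j).eval ξ = 0 := fun j => by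
    simpa [q, Finset.sum_apply, eval_finsetSum] using congrFun hc j
  have hq' : (fun j => (q : κ → K[X]) j /ₘ (X - C ξ)) ∈ LinearMap.ker P.mulVecLin :=
    (smul_mem_ker_mulVecLin_iff P (X_sub_C_ne_zero ξ)).1 (eq_X_sub_C_smul_divByMonic hq ▸ q.2)
  have hdiv : q = (X - C ξ) • ⟨_, hq'⟩ := Subtype.ext (eq_X_sub_C_smul_divByMonic hq)
  have hrepr : C (c i) = (X - C ξ) * b.repr ⟨_, hq'⟩ i := by
    rw [← congrFun (b.repr_sum_self fun i => C (c i)) i]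
    exact (congrArg (b.repr · i) hdiv).trans (by rw [map_smul]; rfl)
  simpa using congrArg (eval ξ) hrepr

theorem Matrix.finrank_map_eval_ker (P : Matrix ι κ K[X]) (ξ : K) :
    Module.finrank K (((LinearMap.ker P.mulVecLin).restrictScalars K).map ((leval ξ).compLeft κ))
      = Module.finrank K[X] (LinearMap.ker P.mulVecLin) := by
  let b := Module.finBasis K[X] (LinearMap.ker P.mulVecLin)
  suffices h : ((LinearMap.ker P.mulVecLin).restrictScalars K).map ((leval ξ).compLeft κ)
      = Submodule.span K (Set.range fun i => (leval ξ).compLeft κ (b i : κ → K[X])) by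
    rw [h, finrank_span_eq_card (P.linearIndependent_eval_basis_ker b ξ), Fintype.card_fin]
  refine le_antisymm ?_ (Submodule.span_le.2 ?_)
  · rintro _ ⟨q, hq, rfl⟩
    refine (Submodule.mem_span_range_iff_exists_fun K).2 ⟨fun i => (b.repr ⟨q, hq⟩ i).eval ξ, ?_⟩
    have hsum : ∑ i, b.repr ⟨q, hq⟩ i • (b i : κ → K[X]) = q := by
      simpa only [Submodule.coe_sum, Submodule.coe_smul] using
        congrArg Subtype.val (b.sum_repr ⟨q, hq⟩)
    conv_rhs => rw [← hsum]
    simp only [map_sum, Polynomial.compLeft_leval_smul]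
  · rintro _ ⟨i, rfl⟩
    exact ⟨b i, (b i).2, rfl⟩

theorem Matrix.finrank_ker_map_le {R F : Type*} [CommRing R] [IsDomain R] [Field F] [Algebra R F]
    [IsFractionRing R F] (P : Matrix ι κ R) [Module.Free R (LinearMap.ker P.mulVecLin)]
    [Module.Finite R (LinearMap.ker P.mulVecLin)] :
    Module.finrank F (LinearMap.ker (P.map (algebraMap R F)).mulVecLin)
      ≤ Module.finrank R (LinearMap.ker P.mulVecLin) := by
  let b := Module.finBasis R (LinearMap.ker P.mulVecLin)
  set φ := algebraMap R F
  refine (Submodule.finrank_mono ?_).trans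
    ((finrank_range_le_card (R := F) fun i => φ ∘ (b i : κ → R)).trans (Fintype.card_fin _).le)
  intro w hw
  obtain ⟨d, hd, v, hv⟩ := IsLocalization.exists_algebraMap_comp_eq_smul (nonZeroDivisors R) w
  have hφd : φ d ≠ 0 := IsFractionRing.to_map_ne_zero_of_mem_nonZeroDivisors hd
  have hvker : v ∈ LinearMap.ker P.mulVecLin := by
    rw [LinearMap.mem_ker, mulVecLin_apply] at hw ⊢
    funext i
    apply IsFractionRing.injective R F
    rw [RingHom.map_mulVec, hv, mulVec_smul, hw]
    simp
  have hsum : ∑ i, b.repr ⟨v, hvker⟩ i • (b i : κ → R) = v := by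
    simpa only [Submodule.coe_sum, Submodule.coe_smul] using
      congrArg Subtype.val (b.sum_repr ⟨v, hvker⟩)
  have hφv : φ ∘ v ∈ Submodule.span F (Set.range fun i => φ ∘ (b i : κ → R)) := by
    refine (Submodule.mem_span_range_iff_exists_fun F).2 ⟨fun i => φ (b.repr ⟨v, hvker⟩ i), ?_⟩
    conv_rhs => rw [← hsum]
    funext j
    simp [Finset.sum_apply, map_sum, Algebra.smul_def]
  have hw : w = (φ d)⁻¹ • φ ∘ v := by rw [hv, smul_smul, inv_mul_cancel₀ hφd, one_smul]
  exact hw ▸ Submodule.smul_mem _ _ hφv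

end PolynomialMatrix

section Pencil

variable {N : Type*} (A B : Matrix N N ℂ)

def pencil : Matrix N N ℂ[X] := A.map C - (X : ℂ[X]) • B.map C

theorem pencil_map_eval (t : ℂ) : (pencil A B).map (evalRingHom t) = A - t • B := by
  ext i j
  simp [pencil]
  ring

variable [Fintype N]

theorem forall_mulVec_eval_eq_zero_iff (p : N → ℂ[X]) :
    (∀ t : ℂ, (A - t • B) *ᵥ (fun i => (p i).eval t) = 0)
      ↔ p ∈ LinearMap.ker (pencil A B).mulVecLin := by
  simp only [LinearMap.mem_ker, mulVecLin_apply, mulVec_eq_zero_iff_forall_eval, pencil_map_eval]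

theorem gKer_eq_map (ξ : ℂ) :
    GKer A B ξ = ((LinearMap.ker (pencil A B).mulVecLin).restrictScalars ℂ).map
      ((leval ξ).compLeft N) := by
  refine (congrArg (Submodule.span ℂ) ?_).trans (Submodule.span_eq _)
  ext v
  constructor
  · rintro ⟨p, hp, rfl⟩
    exact ⟨p, (forall_mulVec_eval_eq_zero_iff A B p).1 hp, rfl⟩
  · rintro ⟨p, hp, rfl⟩
    exact ⟨p, (forall_mulVec_eval_eq_zero_iff A B p).2 hp, rfl⟩

theorem finrank_gKer (ξ : ℂ) :
    Module.finrank ℂ (GKer A B ξ) = Module.finrank ℂ[X] (LinearMap.ker (pencil A B).mulVecLin) := by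
  rw [gKer_eq_map]
  exact (pencil A B).finrank_map_eval_ker ξ

theorem gKer_le_ker (ξ : ℂ) : GKer A B ξ ≤ LinearMap.ker (A - ξ • B).mulVecLin :=
  Submodule.span_le.2 fun _ ⟨_, hp, hv⟩ => hv ▸ hp ξ

theorem exists_finrank_ker_le :
    ∃ ξ : ℂ, Module.finrank ℂ (LinearMap.ker (A - ξ • B).mulVecLin)
      ≤ Module.finrank ℂ[X] (LinearMap.ker (pencil A B).mulVecLin) := by
  classical
  obtain ⟨ξ, hξ⟩ := (pencil A B).exists_rank_map_le_rank_map_eval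
  refine ⟨ξ, ?_⟩
  have hF := ((pencil A B).map (algebraMap ℂ[X] (RatFunc ℂ))).rank_add_finrank_ker
  have hξker := (A - ξ • B).rank_add_finrank_ker
  have hFker := (pencil A B).finrank_ker_map_le (F := RatFunc ℂ)
  rw [pencil_map_eval] at hξ
  omega

theorem gKer_le_redMin (ξ : ℂ) : GKer A B ξ ≤ RedMin A B :=
  (Set.subset_iUnion (fun ξ => (GKer A B ξ : Set (N → ℂ))) ξ).trans Submodule.subset_span

theorem eval_mem_redMin {p : N → ℂ[X]} (hp : ∀ t : ℂ, (A - t • B) *ᵥ (fun i => (p i).eval t) = 0)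
    (ζ : ℂ) : (fun i => (p i).eval ζ) ∈ RedMin A B :=
  gKer_le_redMin A B ζ (Submodule.subset_span ⟨p, hp, rfl⟩)

theorem redMin_le {W : Submodule ℂ (N → ℂ)}
    (h : ∀ p : N → ℂ[X], (∀ t : ℂ, (A - t • B) *ᵥ (fun i => (p i).eval t) = 0) →
      ∀ ζ, (fun i => (p i).eval ζ) ∈ W) :
    RedMin A B ≤ W :=
  Submodule.span_le.2 <| Set.iUnion_subset fun ζ =>
    Submodule.span_le.2 fun _ ⟨p, hp, hv⟩ => hv ▸ h p hp ζ

theorem sub_smul_mulVec_of_mulVec_eq_zero {s : ℂ} {v : N → ℂ} (hv : (A - s • B) *ᵥ v = 0)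
    (ξ : ℂ) : (A - ξ • B) *ᵥ v = (s - ξ) • B *ᵥ v := by
  rw [sub_mulVec, smul_mulVec, sub_eq_zero] at hv
  rw [sub_mulVec, smul_mulVec, hv, sub_smul]

theorem mulVec_eval_mem_map_redMin {p : N → ℂ[X]}
    (hp : ∀ t : ℂ, (A - t • B) *ᵥ (fun i => (p i).eval t) = 0) (ξ ζ : ℂ) :
    B *ᵥ (fun i => (p i).eval ζ) ∈ (RedMin A B).map (A - ξ • B).mulVecLin := by
  set Y := (RedMin A B).map (A - ξ • B).mulVecLin
  have hclosed : IsClosed {s : ℂ | B *ᵥ (fun i => (p i).eval s) ∈ Y} :=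
    Y.closed_of_finiteDimensional.preimage <| B.mulVecLin.continuous_of_finiteDimensional.comp <|
      continuous_pi fun i => (p i).continuous
  have hsub : ({ξ}ᶜ : Set ℂ) ⊆ {s : ℂ | B *ᵥ (fun i => (p i).eval s) ∈ Y} := fun s hs => by
    have hmem := Submodule.mem_map_of_mem (f := (A - ξ • B).mulVecLin) (eval_mem_redMin A B hp s)
    rw [mulVecLin_apply, sub_smul_mulVec_of_mulVec_eq_zero A B (hp s)] at hmem
    exact (Y.smul_mem_iff (sub_ne_zero.2 hs)).1 hmem
  have hall := hclosed.closure_subset_iff.2 hsub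
  rw [(dense_compl_singleton ξ).closure_eq] at hall
  exact hall (Set.mem_univ ζ)

theorem map_redMin_eq (ξ : ℂ) :
    (RedMin A B).map (A - ξ • B).mulVecLin = (RedMin A B).map B.mulVecLin := by
  refine le_antisymm (Submodule.map_le_iff_le_comap.2 (redMin_le A B fun p hp ζ => ?_))
    (Submodule.map_le_iff_le_comap.2 (redMin_le A B fun p hp ζ =>
      mulVec_eval_mem_map_redMin A B hp ξ ζ))
  rw [Submodule.mem_comap, mulVecLin_apply, sub_smul_mulVec_of_mulVec_eq_zero A B (hp ζ)]
  exact Submodule.smul_mem _ _ (Submodule.mem_map_of_mem (eval_mem_redMin A B hp ζ))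

theorem gKer_eq_ker_inf_redMin (ξ : ℂ) :
    GKer A B ξ = LinearMap.ker (A - ξ • B).mulVecLin ⊓ RedMin A B := by
  obtain ⟨ξg, hξg⟩ := exists_finrank_ker_le A B
  refine Submodule.eq_of_le_of_finrank_le (le_inf (gKer_le_ker A B ξ) (gKer_le_redMin A B ξ)) ?_
  have h := (A - ξ • B).mulVecLin.finrank_ker_inf_add_finrank_map (RedMin A B)
  have hg := (A - ξg • B).mulVecLin.finrank_ker_inf_add_finrank_map (RedMin A B)
  rw [map_redMin_eq] at h hg
  have hle := Submodule.finrank_mono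
    (inf_le_left : LinearMap.ker (A - ξg • B).mulVecLin ⊓ RedMin A B ≤ _)
  rw [finrank_gKer]
  omega

theorem nrank_add_finrank_ker_pencil :
    nrank A B + Module.finrank ℂ[X] (LinearMap.ker (pencil A B).mulVecLin) = Fintype.card N := by
  have hle : ∀ ξ : ℂ, (A - ξ • B).rank
      + Module.finrank ℂ[X] (LinearMap.ker (pencil A B).mulVecLin) ≤ Fintype.card N := fun ξ => by
    rw [← (A - ξ • B).rank_add_finrank_ker, ← finrank_gKer A B ξ]
    exact Nat.add_le_add_left (Submodule.finrank_mono (gKer_le_ker A B ξ)) _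
  obtain ⟨ξg, hξg⟩ := exists_finrank_ker_le A B
  have hbdd : BddAbove (Set.range fun ξ : ℂ => (A - ξ • B).rank) :=
    ⟨Fintype.card N, Set.forall_mem_range.2 fun ξ => (A - ξ • B).rank_le_card_width⟩
  have hsup := ciSup_le fun ξ => Nat.le_sub_of_add_le (hle ξ)
  have hg := le_ciSup hbdd ξg
  have hrk := (A - ξg • B).rank_add_finrank_ker
  have hm := hle ξg
  unfold nrank
  omega

end Pencil

/-- **Characterizations of eigenvalues of a (possibly singular) pencil.** For an
`n × n` pencil `A − λB` and `λ₀ ∈ ℂ`, the following are equivalent: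
(b) `rank(A − λ₀B) < nrank(A − λB)`;
(c) `dim GKer(A − λ₀B) < dim ker(A − λ₀B)`;
(d) there is `v` with `(A − λ₀B)v = 0` and `v ∉ GKer(A − λ₀B)`;
(e) there is `v` with `(A − λ₀B)v = 0` and `v ∉ R(A,B)`. -/
theorem pencil_eigenvalue_tfae {n : ℕ} (A B : Matrix (Fin n) (Fin n) ℂ) (l₀ : ℂ) :
    List.TFAE
      [ (A - l₀ • B).rank < nrank A B,
        Module.finrank ℂ (GKer A B l₀) <
          Module.finrank ℂ (LinearMap.ker (A - l₀ • B).mulVecLin),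
        ∃ v : Fin n → ℂ, (A - l₀ • B).mulVec v = 0 ∧ v ∉ GKer A B l₀,
        ∃ v : Fin n → ℂ, (A - l₀ • B).mulVec v = 0 ∧ v ∉ RedMin A B ] := by
  have hrank := (A - l₀ • B).rank_add_finrank_ker
  have hnrank := nrank_add_finrank_ker_pencil A B
  have hgKer := finrank_gKer A B l₀
  rw [Fintype.card_fin] at hrank hnrank
  tfae_have 1 ↔ 2 := by omega
  tfae_have 2 ↔ 3 := by
    simp only [Submodule.finrank_lt_finrank_iff_exists_notMem (gKer_le_ker A B l₀),
      LinearMap.mem_ker, mulVecLin_apply]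
  tfae_have 3 ↔ 4 := by
    simp only [gKer_eq_ker_inf_redMin, Submodule.mem_inf, LinearMap.mem_ker, mulVecLin_apply]
    exact exists_congr fun v => and_congr_right fun hv => by simp [hv]
  tfae_finish
end
end

section
/- Let A, B be n × n complex matrices. Then the dimension of GKer(A − ξB) is the same for every ξ ∈ ℂ, and for all but finitely many ξ ∈ ℂ one has ker(A − ξB) = GKer(A − ξB). -/
set_option maxHeartbeats 1000000


open Matrix

noncomputable section

namespace GKerAux

open Polynomial

variable {n : ℕ} (A B : Matrix (Fin n) (Fin n) ℂ)

/-- The pencil as a matrix of polynomials. -/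
def Pm : Matrix (Fin n) (Fin n) ℂ[X] := A.map C - (X : ℂ[X]) • B.map C

lemma eval_Pm_mulVec (p : Fin n → ℂ[X]) (t : ℂ) (i : Fin n) :
    (((Pm A B).mulVec p) i).eval t
      = ((A - t • B).mulVec (fun j => (p j).eval t)) i := by
  simp [Pm, Matrix.mulVec, dotProduct, eval_finset_sum, sub_mul,
    Matrix.sub_apply, Matrix.smul_apply, Matrix.map_apply, smul_eq_mul,
    mul_assoc, mul_left_comm]

lemma pencil_iff (p : Fin n → ℂ[X]) :
    (∀ t : ℂ, (A - t • B).mulVec (fun i => (p i).eval t) = 0)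
      ↔ (Pm A B).mulVec p = 0 := by
  constructor
  · intro h
    funext i
    refine Polynomial.funext fun t => ?_
    rw [eval_Pm_mulVec, h t]
    simp
  · intro h t
    funext i
    rw [← eval_Pm_mulVec, h]
    simp

/-- The module of polynomial solutions of the pencil. -/
def Msub : Submodule ℂ[X] (Fin n → ℂ[X]) := LinearMap.ker (Pm A B).mulVecLin

lemma mem_Msub_iff (p : Fin n → ℂ[X]) :
    p ∈ Msub A B ↔ (Pm A B).mulVec p = 0 := by
  simp [Msub, Matrix.mulVecLin, LinearMap.mem_ker]

/-- Saturation: the solution module is closed under division by nonzero scalars. -/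
lemma smul_mem_Msub (g : ℂ[X]) (hg : g ≠ 0) (q : Fin n → ℂ[X])
    (h : g • q ∈ Msub A B) : q ∈ Msub A B := by
  rw [mem_Msub_iff] at h ⊢
  rw [Matrix.mulVec_smul] at h
  funext i
  have := congrFun h i
  simp only [Pi.smul_apply, smul_eq_mul, Pi.zero_apply] at this ⊢
  exact (mul_eq_zero.mp this).resolve_left hg

lemma gker_eq_span (r : ℕ) (b : Module.Basis (Fin r) ℂ[X] (Msub A B)) (ξ : ℂ) :
    GKer A B ξ
      = Submodule.span ℂ
          (Set.range fun i : Fin r => fun j => ((b i : Fin n → ℂ[X]) j).eval ξ) := by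
  apply le_antisymm
  · rw [GKer, Submodule.span_le]
    rintro v ⟨p, hp, rfl⟩
    have hpM : p ∈ Msub A B := (mem_Msub_iff A B p).mpr ((pencil_iff A B p).mp hp)
    have hrepr : (∑ i, b.repr ⟨p, hpM⟩ i • b i : Msub A B) = ⟨p, hpM⟩ :=
      b.sum_repr ⟨p, hpM⟩
    have hamb : p = ∑ i, b.repr ⟨p, hpM⟩ i • (b i : Fin n → ℂ[X]) := by
      have := congrArg (Subtype.val) hrepr
      simpa [-Module.Basis.sum_repr] using this.symm
    have : (fun j => (p j).eval ξ)
        = ∑ i, ((b.repr ⟨p, hpM⟩ i).eval ξ) •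
            (fun j => ((b i : Fin n → ℂ[X]) j).eval ξ) := by
      funext j
      conv_lhs => rw [hamb]
      simp [Finset.sum_apply, eval_finset_sum]
    rw [this]
    exact Submodule.sum_mem _ fun i _ =>
      Submodule.smul_mem _ _ (Submodule.subset_span ⟨i, rfl⟩)
  · rw [Submodule.span_le]
    rintro v ⟨i, rfl⟩
    refine Submodule.subset_span ⟨(b i : Fin n → ℂ[X]), ?_, rfl⟩
    exact (pencil_iff A B _).mpr ((mem_Msub_iff A B _).mp (b i).2)

lemma indep_eval (r : ℕ) (b : Module.Basis (Fin r) ℂ[X] (Msub A B)) (ξ : ℂ) :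
    LinearIndependent ℂ
      (fun i : Fin r => fun j => ((b i : Fin n → ℂ[X]) j).eval ξ) := by
  rw [Fintype.linearIndependent_iff]
  intro g hg i
  -- form the polynomial combination
  set x : Msub A B := ∑ i, C (g i) • b i with hx
  have hxamb : (x : Fin n → ℂ[X]) = ∑ i, C (g i) • (b i : Fin n → ℂ[X]) := by
    simp [hx]
  -- its value at ξ vanishes
  have hval : ∀ j, ((x : Fin n → ℂ[X]) j).eval ξ = 0 := by
    intro j
    have := congrFun hg j
    simp only [Finset.sum_apply, Pi.smul_apply, smul_eq_mul, Pi.zero_apply] at this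
    rw [hxamb]
    simpa [Finset.sum_apply, eval_finset_sum] using this
  -- divide by X - ξ
  have hdvd : ∀ j, ∃ qj : ℂ[X], (x : Fin n → ℂ[X]) j = (X - C ξ) * qj := by
    intro j
    exact (dvd_iff_isRoot.mpr (hval j))
  choose q hq using hdvd
  have hxq : (x : Fin n → ℂ[X]) = (X - C ξ) • q := by
    funext j; simpa [smul_eq_mul] using hq j
  have hqM : q ∈ Msub A B := by
    refine smul_mem_Msub A B (X - C ξ) (X_sub_C_ne_zero ξ) q ?_
    rw [← hxq]; exact x.2
  -- compare representations
  have hxy : x = (X - C ξ) • (⟨q, hqM⟩ : Msub A B) := by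
    apply Subtype.ext
    simpa using hxq
  have hreprx : b.repr x i = C (g i) := by
    rw [hx, b.repr_sum_self]
  have hrepry : b.repr x i = (X - C ξ) * b.repr ⟨q, hqM⟩ i := by
    rw [hxy, LinearEquiv.map_smul, Finsupp.smul_apply, smul_eq_mul]
  by_contra hgi
  have hCg : (C (g i) : ℂ[X]) ≠ 0 := by simpa using hgi
  have hdl : (X - C ξ) ∣ C (g i) := ⟨b.repr ⟨q, hqM⟩ i, by rw [← hreprx, hrepry]⟩
  have := Polynomial.degree_le_of_dvd hdl hCg
  rw [Polynomial.degree_X_sub_C, Polynomial.degree_C (by simpa using hgi)] at this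
  exact absurd this (by norm_num)

lemma finrank_gker (r : ℕ) (b : Module.Basis (Fin r) ℂ[X] (Msub A B)) (ξ : ℂ) :
    Module.finrank ℂ (GKer A B ξ) = r := by
  rw [gker_eq_span A B r b ξ, finrank_span_eq_card (indep_eval A B r b ξ),
    Fintype.card_fin]

/-- `GKer` is always contained in the kernel. -/
lemma gker_le_ker (ξ : ℂ) :
    GKer A B ξ ≤ LinearMap.ker (A - ξ • B).mulVecLin := by
  rw [GKer, Submodule.span_le]
  rintro v ⟨p, hp, rfl⟩
  simp only [SetLike.mem_coe, LinearMap.mem_ker, Matrix.mulVecLin_apply]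
  exact hp ξ

/-- The saturation of the range of the pencil. -/
def Sat : Submodule ℂ[X] (Fin n → ℂ[X]) where
  carrier := {w | ∃ g : ℂ[X], g ≠ 0 ∧ g • w ∈ LinearMap.range (Pm A B).mulVecLin}
  zero_mem' := ⟨1, one_ne_zero, by simp⟩
  add_mem' := by
    rintro w₁ w₂ ⟨g₁, hg₁, hm₁⟩ ⟨g₂, hg₂, hm₂⟩
    refine ⟨g₁ * g₂, mul_ne_zero hg₁ hg₂, ?_⟩
    have : (g₁ * g₂) • (w₁ + w₂) = g₂ • (g₁ • w₁) + g₁ • (g₂ • w₂) := by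
      rw [smul_add, mul_smul g₁ g₂ w₁, smul_comm g₁ g₂ w₁,
        mul_comm g₁ g₂, mul_smul g₂ g₁ w₂, smul_comm g₂ g₁ w₂]
    rw [this]
    exact Submodule.add_mem _ (Submodule.smul_mem _ _ hm₁) (Submodule.smul_mem _ _ hm₂)
  smul_mem' := by
    rintro c w ⟨g, hg, hm⟩
    exact ⟨g, hg, by rw [smul_comm]; exact Submodule.smul_mem _ _ hm⟩

lemma exists_uniform_f :
    ∃ f : ℂ[X], f ≠ 0 ∧ ∀ w ∈ Sat A B, f • w ∈ LinearMap.range (Pm A B).mulVecLin := by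
  have hfg : (Sat A B).FG := IsNoetherian.noetherian _
  obtain ⟨S, hS⟩ := hfg
  have hSmem : ∀ s ∈ S, s ∈ Sat A B := fun s hs => hS ▸ Submodule.subset_span hs
  choose gfun hgne hgmem using fun s (hs : s ∈ S) => hSmem s hs
  set f : ℂ[X] := ∏ s ∈ S.attach, gfun s s.2 with hf
  refine ⟨f, Finset.prod_ne_zero_iff.mpr fun s _ => hgne s s.2, ?_⟩
  have hgen : ∀ s ∈ S, f • s ∈ LinearMap.range (Pm A B).mulVecLin := by
    intro s hs
    have : f = gfun s hs * ∏ t ∈ S.attach.erase ⟨s, hs⟩, gfun t t.2 :=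
      (Finset.mul_prod_erase S.attach (fun t => gfun t.1 t.2)
        (Finset.mem_attach S ⟨s, hs⟩)).symm
    rw [this, mul_comm, mul_smul]
    exact Submodule.smul_mem _ _ (hgmem s hs)
  intro w hw
  rw [← hS] at hw
  induction hw using Submodule.span_induction with
  | mem s hs => exact hgen s hs
  | zero => simp
  | add x y _ _ hx hy => rw [smul_add]; exact Submodule.add_mem _ hx hy
  | smul c x _ hx => rw [smul_comm]; exact Submodule.smul_mem _ _ hx

lemma ker_le_gker {f : ℂ[X]}
    (hf : ∀ w ∈ Sat A B, f • w ∈ LinearMap.range (Pm A B).mulVecLin)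
    {ξ : ℂ} (hξ : f.eval ξ ≠ 0) :
    LinearMap.ker (A - ξ • B).mulVecLin ≤ GKer A B ξ := by
  intro v hv
  rw [LinearMap.mem_ker, Matrix.mulVecLin_apply] at hv
  set p₀ : Fin n → ℂ[X] := fun i => C (v i) with hp₀
  set qv : Fin n → ℂ[X] := (Pm A B).mulVec p₀ with hqv
  have hqroot : ∀ i, (qv i).eval ξ = 0 := by
    intro i
    rw [hqv, eval_Pm_mulVec]
    have : (fun j => (p₀ j).eval ξ) = v := by funext j; simp [hp₀]
    rw [this, hv]
    simp
  have hdvd : ∀ i, ∃ wi : ℂ[X], qv i = (X - C ξ) * wi :=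
    fun i => dvd_iff_isRoot.mpr (hqroot i)
  choose w hw using hdvd
  have hqw : qv = (X - C ξ) • w := by funext i; simpa [smul_eq_mul] using hw i
  have hwSat : w ∈ Sat A B := by
    refine ⟨X - C ξ, X_sub_C_ne_zero ξ, ?_⟩
    rw [← hqw, hqv]
    exact ⟨p₀, rfl⟩
  obtain ⟨u, hu⟩ := hf w hwSat
  rw [Matrix.mulVecLin_apply] at hu
  set p : Fin n → ℂ[X] := f • p₀ - (X - C ξ) • u with hp
  have hpker : (Pm A B).mulVec p = 0 := by
    rw [hp]
    have : (Pm A B).mulVec (f • p₀ - (X - C ξ) • u)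
        = f • (Pm A B).mulVec p₀ - (X - C ξ) • (Pm A B).mulVec u := by
      simp [Matrix.mulVec_sub, Matrix.mulVec_smul]
    rw [this, hu, ← hqv, hqw, smul_comm, sub_self]
  have hz : (fun i => (p i).eval ξ) ∈ GKer A B ξ := by
    refine Submodule.subset_span ⟨p, (pencil_iff A B p).mpr hpker, rfl⟩
  have hzval : (fun i => (p i).eval ξ) = f.eval ξ • v := by
    funext i
    simp [hp, hp₀, smul_eq_mul]
  rw [hzval] at hz
  have := Submodule.smul_mem (GKer A B ξ) (f.eval ξ)⁻¹ hz
  rwa [inv_smul_smul₀ hξ] at this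

end GKerAux

/-- **The generic kernel has constant dimension, and coincides with the kernel for
all but finitely many `ξ`.** -/
theorem gker_constant_dim_and_generically_kernel {n : ℕ}
    (A B : Matrix (Fin n) (Fin n) ℂ) :
    (∀ ξ₁ ξ₂ : ℂ, Module.finrank ℂ (GKer A B ξ₁) = Module.finrank ℂ (GKer A B ξ₂)) ∧
    {ξ : ℂ | LinearMap.ker (A - ξ • B).mulVecLin ≠ GKer A B ξ}.Finite := by
  constructor
  · obtain ⟨r, b⟩ :=
      Submodule.basisOfPid (Pi.basisFun (Polynomial ℂ) (Fin n)) (GKerAux.Msub A B)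
    intro ξ₁ ξ₂
    rw [GKerAux.finrank_gker A B r b ξ₁, GKerAux.finrank_gker A B r b ξ₂]
  · obtain ⟨f, hf0, hf⟩ := GKerAux.exists_uniform_f A B
    refine Set.Finite.subset (Polynomial.finite_setOf_isRoot hf0) ?_
    intro ξ hξ
    by_contra hroot
    simp only [Set.mem_setOf_eq, Polynomial.IsRoot] at hroot
    exact hξ (le_antisymm (GKerAux.ker_le_gker A B hf hroot) (GKerAux.gker_le_ker A B ξ))
end
end
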